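/- arXiv:2403.18496 — 16 statements merged into one kernel-verified Lean document; each statement's English description precedes it below -/
import Mathlib

section
/- Let (A, ∗, ⋎, ⋄, ▪) be an NS-Poisson algebra over a field of characteristic 0. Then A with the product x ⊙ y = x∗y + y∗x + x⋎y and the bracket [x,y] = x⋄y − y⋄x + x▪y is a Poisson algebra (the sub-adjacent Poisson algebra of (A, ∗, ⋎, ⋄, ▪)). -/
variable (K : Type*) [Field K] [CharZero K]
variable {A V : Type*} [AddCommGroup A] [Module K A] [AddCommGroup V] [Module K V]

/-- A Poisson algebra structure on `A`: a commutative associative product `m` and a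
Lie bracket `br` satisfying the Leibniz rule. -/
def IsPoisson (m br : A →ₗ[K] A →ₗ[K] A) : Prop :=
  (∀ x y, m x y = m y x) ∧
  (∀ x y z, m (m x y) z = m x (m y z)) ∧
  (∀ x y, br x y = - br y x) ∧
  (∀ x y z, br x (br y z) + br y (br z x) + br z (br x y) = 0) ∧
  (∀ x y z, br x (m y z) = m (br x y) z + m y (br x z))

/-- An NS-commutative algebra structure on `A`. -/
def IsNSComm (s c : A →ₗ[K] A →ₗ[K] A) : Prop :=
  (∀ x y, c x y = c y x) ∧
  (∀ x y z, s x (s y z) = s (s x y + s y x + c x y) z) ∧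
  (∀ x y z, s x (c y z) + c x (s y z + s z y + c y z)
      = s y (c x z) + c y (s x z + s z x + c x z))

/-- An NS-Lie algebra structure on `A`. -/
def IsNSLie (d b : A →ₗ[K] A →ₗ[K] A) : Prop :=
  (∀ x y, b x y = - b y x) ∧
  (∀ x y z, d x (d y z) - d (d x y) z - d y (d x z) + d (d y x) z = d (b x y) z) ∧
  (∀ x y z,
    b x (d y z - d z y + b y z) + b y (d z x - d x z + b z x) + b z (d x y - d y x + b x y)
    + d x (b y z) + d y (b z x) + d z (b x y) = 0)

/-- An NS-Poisson algebra structure on `A`. -/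
def IsNSPoisson (s c d b : A →ₗ[K] A →ₗ[K] A) : Prop :=
  IsNSComm K s c ∧ IsNSLie K d b ∧
  (∀ x y z, s (d x y - d y x + b x y) z = d x (s y z) - s y (d x z)) ∧
  (∀ x y z, d (s x y + s y x + c x y) z = s x (d y z) + s y (d x z)) ∧
  (∀ x y z, b x (s y z + s z y + c y z) + d x (c y z)
      = c (d x y - d y x + b x y) z + s z (b x y)
        + c y (d x z - d z x + b x z) + s y (b x z))

/-- The sub-adjacent structure of an NS-Poisson algebra, with product
`x ⊙ y = x∗y + y∗x + x⋎y` and bracket `[x,y] = x⋄y − y⋄x + x▪y`, is a Poisson algebra. -/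
theorem subadjacent_poisson_of_NSPoisson (s c d b : A →ₗ[K] A →ₗ[K] A)
    (h : IsNSPoisson K s c d b) :
    IsPoisson K (s + s.flip + c) (d - d.flip + b) := by
  obtain ⟨⟨hc, hA1, hA2⟩, ⟨hbs, hL1, hL2⟩, hP1, hP2, hP3⟩ := h
  refine ⟨?_, ?_, ?_, ?_, ?_⟩
  · -- commutativity
    intro x y
    simp only [LinearMap.add_apply, LinearMap.flip_apply]
    linear_combination (norm := module) hc x y
  · -- associativity
    intro x y z
    have h1 := hA1 x y z
    have h3 := hA2 z x y
    have h4 := hA1 z x y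
    have h5 := hA1 x z y
    have h6 := hA1 z y x
    have k1 : s (c z y) x = s (c y z) x := by rw [hc z y]
    have k2 : s (c z x) y = s (c x z) y := by rw [hc z x]
    have m1 : c (s x y) z = c z (s x y) := hc _ _
    have m2 : c (s y x) z = c z (s y x) := hc _ _
    have m3 : c (c x y) z = c z (c x y) := hc _ _
    have m4 : s x (c z y) = s x (c y z) := by rw [hc z y]
    have m5 : c x (c z y) = c x (c y z) := by rw [hc z y]
    simp only [map_add, map_sub, LinearMap.add_apply, LinearMap.sub_apply,
      LinearMap.flip_apply] at h1 h3 h4 h5 h6 ⊢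
    linear_combination (norm := module)
      -h1 + h3 + h4 - h5 + h6 + k1 + k2 + m1 + m2 + m3 + m4 + m5
  · -- skew-symmetry
    intro x y
    simp only [LinearMap.add_apply, LinearMap.sub_apply, LinearMap.flip_apply]
    linear_combination (norm := module) hbs x y
  · -- Jacobi identity
    intro x y z
    have l1a := hL1 x y z
    have l1b := hL1 y z x
    have l1c := hL1 z x y
    have l2 := hL2 x y z
    simp only [map_add, map_sub, LinearMap.add_apply, LinearMap.sub_apply,
      LinearMap.flip_apply] at l1a l1b l1c l2 ⊢
    linear_combination (norm := module) l1a + l1b + l1c + l2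
  · -- Leibniz rule
    intro x y z
    have p1a := hP1 x y z
    have p1b := hP1 x z y
    have p2 := hP2 y z x
    have p3 := hP3 x y z
    simp only [map_add, map_sub, LinearMap.add_apply, LinearMap.sub_apply,
      LinearMap.flip_apply] at p1a p1b p2 p3 ⊢
    linear_combination (norm := module) -p1a - p1b + p3 - p2
end

section
/- Let (A, ∗, ⋎, ⋄, ▪) be an NS-Poisson algebra over a field of characteristic 0, and let A^c = (A, ⊙, [-,-]) be its sub-adjacent Poisson algebra, where x ⊙ y = x∗y + y∗x + x⋎y and [x,y] = x⋄y − y⋄x + x▪y. Define linear maps μ, ρ : A → End(A) by μ_x(y) = x ∗ y and ρ_x(y) = x ⋄ y. Then (A, μ, ρ) is a representation of the Poisson algebra A^c. -/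
variable (K : Type*) [Field K] [CharZero K]
variable {A V : Type*} [AddCommGroup A] [Module K A] [AddCommGroup V] [Module K V]

/-- A representation `(V, μ, ρ)` of the Poisson algebra `(A, m, br)`. -/
def IsPoissonRep (m br : A →ₗ[K] A →ₗ[K] A) (μ ρ : A →ₗ[K] V →ₗ[K] V) : Prop :=
  (∀ x y v, μ (m x y) v = μ x (μ y v)) ∧
  (∀ x y v, ρ (br x y) v = ρ x (ρ y v) - ρ y (ρ x v)) ∧
  (∀ x y v, ρ x (μ y v) - μ y (ρ x v) - μ (br x y) v = 0) ∧
  (∀ x y v, μ x (ρ y v) + μ y (ρ x v) - ρ (m x y) v = 0)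

/-- For an NS-Poisson algebra `(A, s, c, d, b)`, the maps
`μ_x(y) = x ∗ y` and `ρ_x(y) = x ⋄ y` define a representation of the sub-adjacent
Poisson algebra `(A, ⊙, [-,-])` on `A` itself. -/
theorem rep_of_NSPoisson (s c d b : A →ₗ[K] A →ₗ[K] A)
    (h : IsNSPoisson K s c d b) :
    IsPoissonRep K (s + s.flip + c) (d - d.flip + b) s d := by
  obtain ⟨⟨hc1, hc2, hc3⟩, ⟨hl1, hl2, hl3⟩, hp1, hp2, hp3⟩ := h
  refine ⟨fun x y v => ?_, fun x y v => ?_, fun x y v => ?_, fun x y v => ?_⟩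
  · simp only [LinearMap.add_apply, LinearMap.flip_apply]
    rw [hc2]
  · simp only [LinearMap.sub_apply, LinearMap.add_apply, LinearMap.flip_apply,
      map_sub, map_add]
    have := hl2 x y v
    rw [← this]; abel
  · rw [show ((d - d.flip + b) x) y = d x y - d y x + b x y by simp, hp1]
    abel
  · rw [show ((s + s.flip + c) x) y = s x y + s y x + c x y by simp, hp2]
    abel
end

section
/- Let (A, ·) be a commutative associative algebra over a field of characteristic 0 and let N : A → A be a Nijenhuis operator on it, i.e. N(x)·N(y) = N(N(x)·y + x·N(y) − N(x·y)) for all x, y ∈ A. Define bilinear operations x ∗ y = N(x)·y and x ⋎ y = −N(x·y). Then (A, ∗, ⋎) is an NS-commutative algebra; its sub-adjacent commutative associative product x ⊙ y = x∗y + y∗x + x⋎y equals x ·_N y := N(x)·y + x·N(y) − N(x·y); and moreover N(x ·_N y) = N(x)·N(y) for all x, y ∈ A. -/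
variable (K : Type*) [Field K] [CharZero K]
variable {A V : Type*} [AddCommGroup A] [Module K A] [AddCommGroup V] [Module K V]

/-- A Nijenhuis operator `N` on a commutative associative algebra `(A, m)`
induces an NS-commutative algebra with `x ∗ y = N(x)·y` and `x ⋎ y = −N(x·y)`; its
sub-adjacent product is `x ·_N y = N(x)·y + x·N(y) − N(x·y)`, and `N(x ·_N y) = N(x)·N(y)`. -/
theorem NSComm_of_nijenhuis (m : A →ₗ[K] A →ₗ[K] A)
    (hcomm : ∀ x y, m x y = m y x)
    (hassoc : ∀ x y z, m (m x y) z = m x (m y z))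
    (N : A →ₗ[K] A)
    (hN : ∀ x y, m (N x) (N y) = N (m (N x) y + m x (N y) - N (m x y))) :
    IsNSComm K (m.comp N) (-(m.compr₂ N)) ∧
    (∀ x y, (m.comp N) x y + (m.comp N) y x + (-(m.compr₂ N)) x y
        = m (N x) y + m x (N y) - N (m x y)) ∧
    (∀ x y, N (m (N x) y + m x (N y) - N (m x y)) = m (N x) (N y)) := by
  have mcomm3 : ∀ a b c : A, m a (m b c) = m b (m a c) := by
    intro a b c; rw [← hassoc, hcomm a b, hassoc]
  have key : ∀ x y, N (m (N x) y + m x (N y) - N (m x y)) = m (N x) (N y) :=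
    fun x y => (hN x y).symm
  refine ⟨⟨?_, ?_, ?_⟩, ?_, key⟩
  · intro x y
    simp only [LinearMap.neg_apply, LinearMap.compr₂_apply, hcomm x y]
  · intro x y z
    simp only [LinearMap.comp_apply, LinearMap.neg_apply, LinearMap.compr₂_apply,
      LinearMap.add_apply, map_add, map_neg, map_sub]
    rw [hcomm (N y) x]
    have h2 : (m (N ((m (N x)) y))) z + (m (N ((m x) (N y)))) z + -(m (N (N ((m x) y)))) z
        = m (N (m (N x) y + m x (N y) - N (m x y))) z := by
      simp only [map_add, map_sub, LinearMap.add_apply, LinearMap.sub_apply]; abel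
    rw [h2, key, hassoc]
  · intro x y z
    simp only [LinearMap.comp_apply, LinearMap.neg_apply, LinearMap.compr₂_apply,
      LinearMap.add_apply, map_add, map_neg, map_sub, neg_neg]
    rw [hN x (m y z), hN y (m x z)]
    simp only [map_add, map_sub]
    rw [mcomm3 x (N y) z, mcomm3 x (N z) y, mcomm3 y (N x) z, mcomm3 y (N z) x,
      hcomm y x, mcomm3 y x z]
    abel
  · intro x y
    simp only [LinearMap.comp_apply, LinearMap.neg_apply, LinearMap.compr₂_apply]
    rw [hcomm (N y) x]
    abel
end

section
/- Let (A, ·, {-,-}) be a Poisson algebra over a field of characteristic 0 and let N : A → A be a Nijenhuis operator on it. Define four bilinear operations by x ∗ y = N(x)·y, x ⋎ y = −N(x·y), x ⋄ y = {N(x), y} and x ▪ y = −N{x,y} for x, y ∈ A. Then (A, ∗, ⋎, ⋄, ▪) is an NS-Poisson algebra. -/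
variable (K : Type*) [Field K] [CharZero K]
variable {A V : Type*} [AddCommGroup A] [Module K A] [AddCommGroup V] [Module K V]

/-- A Nijenhuis operator on a Poisson algebra induces an NS-Poisson
algebra with `x ∗ y = N(x)·y`, `x ⋎ y = −N(x·y)`, `x ⋄ y = {N(x),y}`, `x ▪ y = −N{x,y}`. -/
theorem NSPoisson_of_nijenhuis (m br : A →ₗ[K] A →ₗ[K] A)
    (hP : IsPoisson K m br) (N : A →ₗ[K] A)
    (hN1 : ∀ x y, m (N x) (N y) = N (m (N x) y + m x (N y) - N (m x y)))
    (hN2 : ∀ x y, br (N x) (N y) = N (br (N x) y + br x (N y) - N (br x y))) :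
    IsNSPoisson K (m.comp N) (-(m.compr₂ N)) (br.comp N) (-(br.compr₂ N)) := by
  obtain ⟨hc, ha, hs, hj, hl⟩ := hP
  -- expanded forms of the Nijenhuis conditions
  have E1 : ∀ a b, m (N a) (N b) = N (m (N a) b) + N (m a (N b)) - N (N (m a b)) :=
    fun a b => by rw [hN1, map_sub, map_add]
  have E2 : ∀ a b, br (N a) (N b) = N (br (N a) b) + N (br a (N b)) - N (N (br a b)) :=
    fun a b => by rw [hN2, map_sub, map_add]
  have swap : ∀ a b c', m a (m b c') = m b (m a c') := fun a b c' => by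
    rw [← ha, hc a b, ha]
  refine ⟨⟨fun x y => ?_, fun x y z => ?_, fun x y z => ?_⟩,
    ⟨fun x y => ?_, fun x y z => ?_, fun x y z => ?_⟩,
    fun x y z => ?_, fun x y z => ?_, fun x y z => ?_⟩ <;>
    simp only [LinearMap.comp_apply, LinearMap.neg_apply, LinearMap.compr₂_apply,
      LinearMap.coe_comp, Function.comp_apply, map_add, map_sub, map_neg,
      LinearMap.add_apply, LinearMap.sub_apply]
  · rw [hc x y]
  · -- NS-comm (2)
    have h : m (m (N x) (N y)) z
        = m (N (m (N x) y)) z + m (N (m x (N y))) z - m (N (N (m x y))) z := by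
      rw [E1 x y, map_sub, map_add, LinearMap.sub_apply, LinearMap.add_apply]
    rw [ha] at h
    rw [hc x (N y)] at h
    linear_combination (norm := abel) h
  · -- NS-comm (3)
    rw [E1 x (m y z), E1 y (m x z), swap x (N y) z, swap x (N z) y, swap y (N x) z,
      swap y (N z) x, swap x y z, hc y x]
    abel
  · rw [hs x y, map_neg]
  · -- NS-Lie (2)
    have jac2 : ∀ a b c', br a (br b c') - br b (br a c') = br (br a b) c' := by
      intro a b c'
      have h := hj a b c'
      have h1 : br b (br c' a) = -(br b (br a c')) := by rw [hs c' a, map_neg]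
      have h2 : br c' (br a b) = -(br (br a b) c') := hs c' (br a b)
      linear_combination (norm := abel) h - h1 - h2
    have h2 : br (br (N x) (N y)) z
        = br (N (br (N x) y)) z - br (N (br (N y) x)) z - br (N (N (br x y))) z := by
      rw [E2 x y, hs x (N y)]
      simp only [map_neg, map_sub, map_add, LinearMap.sub_apply, LinearMap.add_apply,
        LinearMap.neg_apply]
      abel
    linear_combination (norm := abel) (jac2 (N x) (N y) z) + h2
  · -- NS-Lie (3)
    rw [E2 x (br y z), E2 y (br z x), E2 z (br x y)]
    have jx : N (br (N x) (br y z)) - N (br y (br (N x) z)) + N (br z (br (N x) y)) = 0 := by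
      have h0 := hj (N x) y z
      have h1 : br y (br z (N x)) = -(br y (br (N x) z)) := by rw [hs z (N x), map_neg]
      have h : br (N x) (br y z) + -(br y (br (N x) z)) + br z (br (N x) y) = 0 := by
        linear_combination (norm := abel) h0 - h1
      rw [sub_eq_add_neg, ← map_neg, ← map_add, ← map_add, h, map_zero]
    have jy : N (br (N y) (br z x)) - N (br z (br (N y) x)) + N (br x (br (N y) z)) = 0 := by
      have h0 := hj (N y) z x
      have h1 : br z (br x (N y)) = -(br z (br (N y) x)) := by rw [hs x (N y), map_neg]
      have h : br (N y) (br z x) + -(br z (br (N y) x)) + br x (br (N y) z) = 0 := by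
        linear_combination (norm := abel) h0 - h1
      rw [sub_eq_add_neg, ← map_neg, ← map_add, ← map_add, h, map_zero]
    have jz : N (br (N z) (br x y)) - N (br x (br (N z) y)) + N (br y (br (N z) x)) = 0 := by
      have h0 := hj (N z) x y
      have h1 : br x (br y (N z)) = -(br x (br (N z) y)) := by rw [hs y (N z), map_neg]
      have h : br (N z) (br x y) + -(br x (br (N z) y)) + br y (br (N z) x) = 0 := by
        linear_combination (norm := abel) h0 - h1
      rw [sub_eq_add_neg, ← map_neg, ← map_add, ← map_add, h, map_zero]
    have jn : N (N (br x (br y z))) + N (N (br y (br z x))) + N (N (br z (br x y))) = 0 := by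
      rw [← map_add, ← map_add, ← map_add, ← map_add, hj x y z, map_zero, map_zero]
    linear_combination (norm := abel) jn - jx - jy - jz
  · -- NSP1
    have hbig : m (br (N x) (N y)) z
        = m (N (br (N x) y)) z - m (N (br (N y) x)) z - m (N (N (br x y))) z := by
      rw [E2 x y, hs x (N y)]
      simp only [map_neg, map_sub, map_add, LinearMap.sub_apply, LinearMap.add_apply,
        LinearMap.neg_apply]
      abel
    linear_combination (norm := abel) -hbig - hl (N x) (N y) z
  · -- NSP2
    have h8 : br (m (N x) (N y)) z
        = br (N (m (N x) y)) z + br (N (m (N y) x)) z - br (N (N (m x y))) z := by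
      rw [E1 x y, hc x (N y), map_sub, map_add, LinearMap.sub_apply, LinearMap.add_apply]
    have h8b : br (m (N x) (N y)) z = m (N x) (br (N y) z) + m (N y) (br (N x) z) := by
      rw [hs (m (N x) (N y)) z, hl z (N x) (N y), hs z (N x), hs z (N y)]
      simp only [map_neg, LinearMap.neg_apply]
      rw [hc (br (N x) z) (N y)]
      abel
    linear_combination (norm := abel) h8b - h8
  · -- NSP3
    rw [E2 x (m y z), E1 z (br x y), E1 y (br x z)]
    have L1 : N (br (N x) (m y z)) = N (m (br (N x) y) z) + N (m y (br (N x) z)) := by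
      rw [hl (N x) y z, map_add]
    have L2 : N (br x (m (N y) z)) = -N (m (br (N y) x) z) + N (m (N y) (br x z)) := by
      rw [hl x (N y) z, hs x (N y)]
      simp only [map_neg, LinearMap.neg_apply, map_add]
    have L3 : N (br x (m (N z) y)) = -N (m (br (N z) x) y) + N (m (N z) (br x y)) := by
      rw [hl x (N z) y, hs x (N z)]
      simp only [map_neg, LinearMap.neg_apply, map_add]
    have L4 : N (N (br x (m y z))) = N (N (m (br x y) z)) + N (N (m y (br x z))) := by
      rw [hl x y z, map_add, map_add]
    have C1 : N (m (br (N z) x) y) = N (m y (br (N z) x)) := by rw [hc]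
    have C2 : N (N (m (br x y) z)) = N (N (m z (br x y))) := by rw [hc (br x y) z]
    have C3 : N (m (N (br x y)) z) = N (m z (N (br x y))) := by rw [hc]
    linear_combination (norm := abel) -L1 - L2 - L3 + L4 + C2 + C1 - C3
end

section
/- Let (A, ·, {-,-}) be a Poisson algebra over a field of characteristic 0 and let N : A → A be a Nijenhuis operator on it. Then for every natural number k ≥ 0, the k-th power N^k : A → A is also a Nijenhuis operator on the Poisson algebra (A, ·, {-,-}). -/
variable (K : Type*) [Field K] [CharZero K]
variable {A V : Type*} [AddCommGroup A] [Module K A] [AddCommGroup V] [Module K V]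

/-- A Nijenhuis operator on the Poisson algebra `(A, m, br)`. -/
def IsNijenhuisPoisson (m br : A →ₗ[K] A →ₗ[K] A) (N : A →ₗ[K] A) : Prop :=
  (∀ x y, m (N x) (N y) = N (m (N x) y + m x (N y) - N (m x y))) ∧
  (∀ x y, br (N x) (N y) = N (br (N x) y + br x (N y) - N (br x y)))

lemma nijenhuis_key (μ : A →ₗ[K] A →ₗ[K] A) (N : A →ₗ[K] A)
    (h : ∀ x y, μ (N x) (N y) = N (μ (N x) y + μ x (N y) - N (μ x y))) :
    ∀ p q : ℕ, ∀ x y : A, μ ((N ^ p) x) ((N ^ q) y)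
      = (N ^ q) (μ ((N ^ p) x) y) + (N ^ p) (μ x ((N ^ q) y))
        - (N ^ (p + q)) (μ x y) := by
  have Nsucc : ∀ (k : ℕ) (a : A), N ((N ^ k) a) = (N ^ (k + 1)) a := by
    intro k a
    rw [pow_succ']
    rfl
  intro p
  induction p with
  | zero =>
      intro q x y
      simp
  | succ p ihp =>
      intro q
      induction q with
      | zero =>
          intro x y
          simp
      | succ q ihq =>
          intro x y
          have e0 := h ((N ^ p) x) ((N ^ q) y)
          simp only [Nsucc] at e0
          rw [e0, ihq x y, ihp (q + 1) x y, ihp q x y]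
          simp only [map_add, map_sub, Nsucc]
          rw [show p + (q + 1) + 1 = p + 1 + (q + 1) from by omega]
          abel


/-- Every power `N^n` of a Nijenhuis operator `N` on a Poisson algebra
is again a Nijenhuis operator. -/
theorem nijenhuis_pow (m br : A →ₗ[K] A →ₗ[K] A)
    (hP : IsPoisson K m br) (N : A →ₗ[K] A)
    (hN : IsNijenhuisPoisson K m br N) :
    ∀ n : ℕ, IsNijenhuisPoisson K m br (N ^ n) := by
  intro n
  constructor
  · intro x y
    have := nijenhuis_key K m N hN.1 n n x y
    rw [this, map_sub, map_add, pow_add, Module.End.mul_apply]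
  · intro x y
    have := nijenhuis_key K br N hN.2 n n x y
    rw [this, map_sub, map_add, pow_add, Module.End.mul_apply]
end

section
/- Let (A, ·, {-,-}) be a Poisson algebra over a field of characteristic 0 and let N : A → A be a Nijenhuis operator on it. For a Nijenhuis operator M on A, let (A, ∗_M, ⋎_M, ⋄_M, ▪_M) denote the induced NS-Poisson algebra, where x ∗_M y = M(x)·y, x ⋎_M y = −M(x·y), x ⋄_M y = {M(x), y} and x ▪_M y = −M{x,y}. Then for all k, l ≥ 0 the NS-Poisson algebras induced by N^k and N^l are compatible: (A, ∗_{N^k} + ∗_{N^l}, ⋎_{N^k} + ⋎_{N^l}, ⋄_{N^k} + ⋄_{N^l}, ▪_{N^k} + ▪_{N^l}) is an NS-Poisson algebra. -/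
variable (K : Type*) [Field K] [CharZero K]
variable {A V : Type*} [AddCommGroup A] [Module K A] [AddCommGroup V] [Module K V]

section AuxNijenhuis

variable {K}

private lemma key_pow (μ : A →ₗ[K] A →ₗ[K] A) (N : A →ₗ[K] A)
    (h : ∀ x y, μ (N x) (N y) = N (μ (N x) y + μ x (N y) - N (μ x y))) :
    ∀ a b : ℕ, ∀ x y, μ ((N^a) x) ((N^b) y)
      = (N^a) (μ x ((N^b) y)) + (N^b) (μ ((N^a) x) y) - (N^a) ((N^b) (μ x y)) := by
  intro a
  induction a with
  | zero => intro b x y; simp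
  | succ a ih =>
    intro b
    induction b with
    | zero => intro x y; simp
    | succ b ihb =>
      intro x y
      have h1 : ∀ k : ℕ, ∀ z : A, (N^(k+1)) z = N ((N^k) z) := by
        intro k z; rw [pow_succ']; rfl
      rw [h1, h1, h ((N^a) x) ((N^b) y)]
      rw [show μ (N ((N^a) x)) ((N^b) y) = μ ((N^(a+1)) x) ((N^b) y) by rw [h1]]
      rw [show μ ((N^a) x) (N ((N^b) y)) = μ ((N^a) x) ((N^(b+1)) y) by rw [h1]]
      rw [ihb x y, ih (b+1) x y, ih b x y]
      simp only [map_add, map_sub, h1]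
      abel

private lemma sum_nij (μ : A →ₗ[K] A →ₗ[K] A) (N : A →ₗ[K] A)
    (h : ∀ x y, μ (N x) (N y) = N (μ (N x) y + μ x (N y) - N (μ x y))) (p q : ℕ) :
    ∀ x y, μ ((N^p + N^q) x) ((N^p + N^q) y)
      = (N^p + N^q) (μ ((N^p + N^q) x) y + μ x ((N^p + N^q) y) - (N^p + N^q) (μ x y)) := by
  intro x y
  simp only [LinearMap.add_apply, map_add, map_sub, LinearMap.sub_apply,
    LinearMap.neg_apply]
  rw [key_pow μ N h p p, key_pow μ N h p q, key_pow μ N h q p, key_pow μ N h q q]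
  have comm : ∀ z : A, (N^p) ((N^q) z) = (N^q) ((N^p) z) := by
    intro z
    rw [← Module.End.mul_apply, ← Module.End.mul_apply, ← pow_add, ← pow_add, Nat.add_comm]
  rw [comm (μ x y)]
  abel

end AuxNijenhuis

private lemma induced_NS (m br : A →ₗ[K] A →ₗ[K] A) (hP : IsPoisson K m br) (M : A →ₗ[K] A)
    (hm : ∀ x y, m (M x) (M y) = M (m (M x) y + m x (M y) - M (m x y)))
    (hb : ∀ x y, br (M x) (M y) = M (br (M x) y + br x (M y) - M (br x y))) :
    IsNSPoisson K (m.comp M) (-(m.compr₂ M)) (br.comp M) (-(br.compr₂ M)) := by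
  obtain ⟨hc, ha, hsk, hj, hl⟩ := hP
  have hswap : ∀ a b c, m a (m b c) = m b (m a c) := by
    intro a b c; rw [← ha, hc a b, ha]
  have jac2' : ∀ a b c, br a (br b c) = br (br a b) c + br b (br a c) := by
    intro a b c
    have h := hj a b c
    rw [hsk c a, hsk c (br a b)] at h
    simp only [map_neg] at h
    refine sub_eq_zero.mp ?_
    rw [← h]; abel
  have hlz : ∀ u v w, br (m u v) w = m u (br v w) + m v (br u w) := by
    intro u v w
    rw [hsk (m u v) w, hl w u v, hsk w u, hsk w v]
    simp only [map_neg, LinearMap.neg_apply]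
    rw [hc (br u w) v]
    abel
  refine ⟨⟨?_, ?_, ?_⟩, ⟨?_, ?_, ?_⟩, ?_, ?_, ?_⟩
  · -- c symmetric
    intro x y
    simp only [LinearMap.compr₂_apply, LinearMap.neg_apply, neg_inj]
    rw [hc]
  · -- NSComm 2
    intro x y z
    simp only [LinearMap.comp_apply, LinearMap.compr₂_apply, LinearMap.neg_apply,
      LinearMap.add_apply, LinearMap.sub_apply, map_add, map_neg, map_sub, neg_neg]
    rw [← ha, hm x y, hc x (M y)]
    simp only [map_add, map_sub, map_neg, LinearMap.add_apply, LinearMap.sub_apply,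
      LinearMap.neg_apply]
    abel
  · -- NSComm 3
    intro x y z
    simp only [LinearMap.comp_apply, LinearMap.compr₂_apply, LinearMap.neg_apply,
      LinearMap.add_apply, LinearMap.sub_apply, map_add, map_neg, map_sub, neg_neg]
    rw [hm x (m y z), hm y (m x z)]
    simp only [map_add, map_sub, map_neg, neg_neg]
    rw [hswap y (M x) z, hswap (M y) x z, hswap y (M z) x, hswap x (M z) y,
      hswap y x z, hc y x]
    abel
  · -- b skew
    intro x y
    simp only [LinearMap.comp_apply, LinearMap.compr₂_apply, LinearMap.neg_apply,
      LinearMap.add_apply, LinearMap.sub_apply, map_add, map_neg, map_sub, neg_neg]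
    rw [hsk x y]
    simp only [map_neg, neg_neg]
  · -- NSLie 2
    intro x y z
    simp only [LinearMap.comp_apply, LinearMap.compr₂_apply, LinearMap.neg_apply,
      LinearMap.add_apply, LinearMap.sub_apply, map_add, map_neg, map_sub, neg_neg]
    rw [jac2' (M x) (M y) z, hb x y, hsk x (M y)]
    simp only [map_add, map_sub, map_neg, LinearMap.add_apply, LinearMap.sub_apply,
      LinearMap.neg_apply]
    abel
  · -- NSLie 3
    intro x y z
    simp only [LinearMap.comp_apply, LinearMap.compr₂_apply, LinearMap.neg_apply,
      LinearMap.add_apply, LinearMap.sub_apply, map_add, map_neg, map_sub, neg_neg]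
    rw [hb x (br y z), hb y (br z x), hb z (br x y)]
    simp only [map_add, map_sub, map_neg, neg_neg]
    rw [hsk (M z) y, hsk (M x) z, hsk (M y) x]
    simp only [map_neg, neg_neg]
    have z0 : -(M ((br (M x) (br y z) + br y (br z (M x)) + br z (br (M x) y))
          + (br x (br (M y) z) + br (M y) (br z x) + br z (br x (M y)))
          + (br x (br y (M z)) + br y (br (M z) x) + br (M z) (br x y))))
        + M (M (br x (br y z) + br y (br z x) + br z (br x y))) = (0 : A) := by
      rw [hj (M x) y z, hj x (M y) z, hj x y (M z), hj x y z]
      simp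
    rw [← z0]
    simp only [map_add, map_neg]
    abel
  · -- NSP1
    intro x y z
    simp only [LinearMap.comp_apply, LinearMap.compr₂_apply, LinearMap.neg_apply,
      LinearMap.add_apply, LinearMap.sub_apply, map_add, map_neg, map_sub, neg_neg]
    rw [hl (M x) (M y) z, hb x y, hsk x (M y)]
    simp only [map_add, map_sub, map_neg, LinearMap.add_apply, LinearMap.sub_apply,
      LinearMap.neg_apply]
    abel
  · -- NSP2
    intro x y z
    simp only [LinearMap.comp_apply, LinearMap.compr₂_apply, LinearMap.neg_apply,
      LinearMap.add_apply, LinearMap.sub_apply, map_add, map_neg, map_sub, neg_neg]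
    rw [← hlz (M x) (M y) z, hm x y, hc x (M y)]
    simp only [map_add, map_sub, map_neg, LinearMap.add_apply, LinearMap.sub_apply,
      LinearMap.neg_apply]
    abel
  · -- NSP3
    intro x y z
    simp only [LinearMap.comp_apply, LinearMap.compr₂_apply, LinearMap.neg_apply,
      LinearMap.add_apply, LinearMap.sub_apply, map_add, map_neg, map_sub, neg_neg]
    rw [hb x (m y z), hm z (br x y), hm y (br x z)]
    simp only [map_add, map_sub, map_neg, neg_neg]
    rw [hl x (M y) z, hl x (M z) y, hl (M x) y z, hl x y z]
    rw [hsk x (M y), hsk x (M z)]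
    simp only [map_neg, LinearMap.neg_apply, neg_neg, map_add]
    rw [hc y (br (M z) x), hc z (br x y), hc z (M (br x y))]
    abel

/-- For a Nijenhuis operator `N` on a Poisson algebra, the NS-Poisson
structures induced by `N^p` and `N^q` are compatible: their sum is an NS-Poisson algebra. -/
theorem nijenhuis_pow_compatible (m br : A →ₗ[K] A →ₗ[K] A)
    (hP : IsPoisson K m br) (N : A →ₗ[K] A)
    (hN : IsNijenhuisPoisson K m br N) :
    ∀ p q : ℕ,
      IsNSPoisson K
        (m.comp (N ^ p) + m.comp (N ^ q))
        (-(m.compr₂ (N ^ p)) + -(m.compr₂ (N ^ q)))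
        (br.comp (N ^ p) + br.comp (N ^ q))
        (-(br.compr₂ (N ^ p)) + -(br.compr₂ (N ^ q))) := by
  intro p q
  have h1 : m.comp (N ^ p) + m.comp (N ^ q) = m.comp (N ^ p + N ^ q) := by
    ext x y
    simp [LinearMap.add_apply, LinearMap.comp_apply, map_add]
  have h2 : -(m.compr₂ (N ^ p)) + -(m.compr₂ (N ^ q)) = -(m.compr₂ (N ^ p + N ^ q)) := by
    ext x y
    simp [LinearMap.compr₂_apply, LinearMap.add_apply, map_add]
    abel
  have h3 : br.comp (N ^ p) + br.comp (N ^ q) = br.comp (N ^ p + N ^ q) := by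
    ext x y
    simp [LinearMap.add_apply, LinearMap.comp_apply, map_add]
  have h4 : -(br.compr₂ (N ^ p)) + -(br.compr₂ (N ^ q)) = -(br.compr₂ (N ^ p + N ^ q)) := by
    ext x y
    simp [LinearMap.compr₂_apply, LinearMap.add_apply, map_add]
    abel
  rw [h1, h2, h3, h4]
  exact induced_NS K m br hP (N ^ p + N ^ q) (sum_nij m N hN.1 p q) (sum_nij br N hN.2 p q)
end

section
/- Let (A, ·, {-,-}) be a Poisson algebra over a field of characteristic 0, (V, μ, ρ) a representation of it, (h, H) a Poisson 2-cocycle of (A, ·, {-,-}) with coefficients in V, and R : V → A an (h, H)-twisted Rota-Baxter operator. Then the quintuple (V, ∗, ⋎, ⋄, ▪) is an NS-Poisson algebra, where u ∗ v = μ_{R(u)} v, u ⋎ v = h(R(u), R(v)), u ⋄ v = ρ_{R(u)} v and u ▪ v = H(R(u), R(v)) for u, v ∈ V. -/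
variable (K : Type*) [Field K] [CharZero K]
variable {A V : Type*} [AddCommGroup A] [Module K A] [AddCommGroup V] [Module K V]

/-- A Poisson 2-cocycle `(h, H)` of the Poisson algebra `(A, m, br)` with coefficients in
the representation `(V, μ, ρ)`. -/
def IsPoisson2Cocycle (m br : A →ₗ[K] A →ₗ[K] A) (μ ρ : A →ₗ[K] V →ₗ[K] V)
    (h H : A →ₗ[K] A →ₗ[K] V) : Prop :=
  (∀ x y, h x y = h y x) ∧
  (∀ x y z, μ x (h y z) + h x (m y z) = μ y (h x z) + h y (m x z)) ∧
  (∀ x y, H x y = - H y x) ∧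
  (∀ x y z, ρ x (H y z) + ρ y (H z x) + ρ z (H x y)
      + H x (br y z) + H y (br z x) + H z (br x y) = 0) ∧
  (∀ x y z, H x (m y z) + ρ x (h y z)
      = h (br x y) z + μ z (H x y) + h y (br x z) + μ y (H x z))

/-- An `(h, H)`-twisted Rota–Baxter operator `R : V → A`. -/
def IsTwistedRB (m br : A →ₗ[K] A →ₗ[K] A) (μ ρ : A →ₗ[K] V →ₗ[K] V)
    (h H : A →ₗ[K] A →ₗ[K] V) (R : V →ₗ[K] A) : Prop :=
  (∀ u v, m (R u) (R v) = R (μ (R u) v + μ (R v) u + h (R u) (R v))) ∧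
  (∀ u v, br (R u) (R v) = R (ρ (R u) v - ρ (R v) u + H (R u) (R v)))

/-- An `(h, H)`-twisted Rota–Baxter operator `R : V → A` on a Poisson
algebra induces an NS-Poisson algebra on `V` with `u ∗ v = μ_{R u} v`,
`u ⋎ v = h(R u, R v)`, `u ⋄ v = ρ_{R u} v` and `u ▪ v = H(R u, R v)`. -/
theorem NSPoisson_of_twistedRB (m br : A →ₗ[K] A →ₗ[K] A)
    (μ ρ : A →ₗ[K] V →ₗ[K] V) (h H : A →ₗ[K] A →ₗ[K] V)
    (hP : IsPoisson K m br) (hrep : IsPoissonRep K m br μ ρ)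
    (hco : IsPoisson2Cocycle K m br μ ρ h H)
    (R : V →ₗ[K] A) (hR : IsTwistedRB K m br μ ρ h H R) :
    IsNSPoisson K (μ.comp R) ((h.comp R).compl₂ R) (ρ.comp R) ((H.comp R).compl₂ R) := by
  obtain ⟨hm_comm, hm_assoc, hbr_skew, hbr_jac, hleib⟩ := hP
  obtain ⟨r1, r2, r3, r4⟩ := hrep
  obtain ⟨c1, c2, c3, c4, c5⟩ := hco
  obtain ⟨R1, R2⟩ := hR
  simp only [IsNSPoisson, IsNSComm, IsNSLie, LinearMap.comp_apply, LinearMap.compl₂_apply]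
  refine ⟨⟨fun x y => c1 _ _, ?_, ?_⟩, ⟨fun x y => c3 _ _, ?_, ?_⟩, ?_, ?_, ?_⟩
  · intro x y z
    rw [← R1, ← r1]
  · intro x y z
    rw [← R1, ← R1]
    exact c2 (R x) (R y) (R z)
  · intro x y z
    have key := r2 (R x) (R y) z
    rw [R2] at key
    simp only [map_sub, map_add, LinearMap.sub_apply, LinearMap.add_apply] at key
    linear_combination (norm := abel) key.symm
  · intro x y z
    rw [← R2, ← R2, ← R2]
    linear_combination (norm := abel) c4 (R x) (R y) (R z)
  · intro x y z
    rw [← R2]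
    linear_combination (norm := abel) (r3 (R x) (R y) z).symm
  · intro x y z
    rw [← R1]
    linear_combination (norm := abel) (r4 (R x) (R y) z).symm
  · intro x y z
    rw [← R1, ← R2, ← R2]
    exact c5 (R x) (R y) (R z)
end

section
/- Let (A, ∗, ⋎, ⋄, ▪) be an NS-Poisson algebra over a field of characteristic 0 with sub-adjacent Poisson algebra (A, ⊙, [-,-]), where x ⊙ y = x∗y + y∗x + x⋎y and [x,y] = x⋄y − y⋄x + x▪y, and with the representation (A, μ, ρ) of (A, ⊙, [-,-]) given by μ_x(y) = x∗y and ρ_x(y) = x⋄y. Define h(x,y) = x ⋎ y and H(x,y) = x ▪ y. Then the pair (h, H) is a Poisson 2-cocycle of (A, ⊙, [-,-]) with coefficients in the representation (A, μ, ρ). -/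
variable (K : Type*) [Field K] [CharZero K]
variable {A V : Type*} [AddCommGroup A] [Module K A] [AddCommGroup V] [Module K V]

/-- For an NS-Poisson algebra `(A, s, c, d, b)`, the pair
`(h, H) = (⋎, ▪)` is a Poisson 2-cocycle of the sub-adjacent Poisson algebra
`(A, ⊙, [-,-])` with coefficients in the representation `(A, μ, ρ)`,
where `μ_x(y) = x ∗ y` and `ρ_x(y) = x ⋄ y`. -/
theorem cocycle_of_NSPoisson (s c d b : A →ₗ[K] A →ₗ[K] A)
    (h : IsNSPoisson K s c d b) :
    IsPoisson2Cocycle K (s + s.flip + c) (d - d.flip + b) s d c b := by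
  obtain ⟨⟨hc, _hs, hcs⟩, ⟨hbskew, _hd, hjac⟩, _h1, _h2, h3⟩ := h
  refine ⟨hc, ?_, hbskew, ?_, ?_⟩
  all_goals intro x y z
  · have := hcs x y z
    simp only [LinearMap.add_apply, LinearMap.sub_apply, LinearMap.flip_apply, map_add,
      map_sub, map_neg, LinearMap.neg_apply] at this ⊢
    linear_combination (norm := abel) this
  · have := hjac x y z
    simp only [LinearMap.add_apply, LinearMap.sub_apply, LinearMap.flip_apply, map_add,
      map_sub, map_neg, LinearMap.neg_apply] at this ⊢
    linear_combination (norm := abel) this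
  · have := h3 x y z
    simp only [LinearMap.add_apply, LinearMap.sub_apply, LinearMap.flip_apply, map_add,
      map_sub, map_neg, LinearMap.neg_apply] at this ⊢
    linear_combination (norm := abel) this
end

section
/- Let (A, ·, {-,-}) be a Poisson algebra over a field of characteristic 0 and let R : A → A be a Reynolds operator on it. Define bilinear operations x ∗ y = R(x)·y, x ⋎ y = −R(x)·R(y), x ⋄ y = {R(x), y} and x ▪ y = −{R(x), R(y)} for x, y ∈ A. Then (A, ∗, ⋎, ⋄, ▪) is an NS-Poisson algebra. -/
variable (K : Type*) [Field K] [CharZero K]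
variable {A V : Type*} [AddCommGroup A] [Module K A] [AddCommGroup V] [Module K V]

/-- A Reynolds operator `R` on a Poisson algebra induces an NS-Poisson
algebra with `x ∗ y = R(x)·y`, `x ⋎ y = −R(x)·R(y)`, `x ⋄ y = {R(x),y}`,
`x ▪ y = −{R(x),R(y)}`. -/
theorem NSPoisson_of_reynolds (m br : A →ₗ[K] A →ₗ[K] A)
    (hP : IsPoisson K m br) (R : A →ₗ[K] A)
    (hR1 : ∀ x y, m (R x) (R y) = R (m (R x) y + m x (R y) - m (R x) (R y)))
    (hR2 : ∀ x y, br (R x) (R y) = R (br (R x) y + br x (R y) - br (R x) (R y))) :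
    IsNSPoisson K (m.comp R) (-((m.comp R).compl₂ R))
      (br.comp R) (-((br.comp R).compl₂ R)) := by
  obtain ⟨hcomm, hassoc, hskew, hjac, hleib⟩ := hP
  -- key consequences of the Reynolds identities
  have hmul : ∀ x y, R (m (R x) y + m (R y) x + -(m (R x) (R y))) = m (R x) (R y) := by
    intro x y
    have h := (hR1 x y).symm
    rwa [hcomm x (R y), sub_eq_add_neg] at h
  have hbr : ∀ x y, R (br (R x) y - br (R y) x + -(br (R x) (R y))) = br (R x) (R y) := by
    intro x y
    have h := (hR2 x y).symm
    rwa [hskew x (R y), ← sub_eq_add_neg, sub_eq_add_neg (br (R x) y - br (R y) x)] at h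
  -- derived Poisson identities
  have hsw : ∀ a b c : A, m a (m b c) = m b (m a c) := by
    intro a b c
    rw [← hassoc, hcomm a b, hassoc]
  have hjac' : ∀ a b c : A, br a (br b c) - br b (br a c) = br (br a b) c := by
    intro a b c
    have h := hjac a b c
    have h1 : br b (br c a) = -(br b (br a c)) := by rw [hskew c a, map_neg]
    have h2 : br c (br a b) = -(br (br a b) c) := hskew _ _
    linear_combination (norm := module) h - h1 - h2
  have hleib' : ∀ a b c : A, br (m a b) c = m a (br b c) + m b (br a c) := by
    intro a b c
    have h0 := hleib c a b
    have h1 : br (m a b) c = -(br c (m a b)) := hskew _ _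
    have h2 : m (br c a) b = -(m (br a c) b) := by
      rw [hskew c a, map_neg, LinearMap.neg_apply]
    have h3 : m a (br c b) = -(m a (br b c)) := by rw [hskew c b, map_neg]
    have h4 : m (br a c) b = m b (br a c) := hcomm _ _
    linear_combination (norm := module) h1 - h0 - h2 - h3 + h4
  refine ⟨⟨?_, ?_, ?_⟩, ⟨?_, ?_, ?_⟩, ?_, ?_, ?_⟩
  · -- c commutative
    intro x y
    simp only [LinearMap.comp_apply, LinearMap.compl₂_apply, LinearMap.neg_apply]
    rw [hcomm (R x) (R y)]
  · -- NS-comm 2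
    intro x y z
    simp only [LinearMap.comp_apply, LinearMap.compl₂_apply, LinearMap.neg_apply]
    rw [hmul x y]
    exact (hassoc _ _ _).symm
  · -- NS-comm 3
    intro x y z
    simp only [LinearMap.comp_apply, LinearMap.compl₂_apply, LinearMap.neg_apply]
    rw [hmul y z, hmul x z]
    simp only [map_neg]
    rw [hsw (R x) (R y) (R z)]
  · -- b skew
    intro x y
    simp only [LinearMap.comp_apply, LinearMap.compl₂_apply, LinearMap.neg_apply]
    rw [hskew (R x) (R y)]
  · -- NS-Lie 2
    intro x y z
    simp only [LinearMap.comp_apply, LinearMap.compl₂_apply, LinearMap.neg_apply]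
    simp only [map_neg, LinearMap.neg_apply]
    have h5 := congrArg (fun t => br t z) (hbr x y)
    simp only [map_sub, map_add, map_neg, LinearMap.sub_apply, LinearMap.add_apply,
      LinearMap.neg_apply] at h5
    have hj := hjac' (R x) (R y) z
    linear_combination (norm := module) hj - h5
  · -- NS-Lie 3
    intro x y z
    simp only [LinearMap.comp_apply, LinearMap.compl₂_apply, LinearMap.neg_apply]
    rw [hbr y z, hbr z x, hbr x y]
    simp only [map_neg]
    have hj := hjac (R x) (R y) (R z)
    linear_combination (norm := module) -hj - hj
  · -- NSP1
    intro x y z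
    simp only [LinearMap.comp_apply, LinearMap.compl₂_apply, LinearMap.neg_apply]
    rw [hbr x y]
    have hl := hleib (R x) (R y) z
    linear_combination (norm := module) -hl
  · -- NSP2
    intro x y z
    simp only [LinearMap.comp_apply, LinearMap.compl₂_apply, LinearMap.neg_apply]
    rw [hmul x y]
    exact hleib' (R x) (R y) z
  · -- NSP3
    intro x y z
    simp only [LinearMap.comp_apply, LinearMap.compl₂_apply, LinearMap.neg_apply]
    rw [hmul y z, hbr x y, hbr x z]
    simp only [map_neg]
    have hl := hleib (R x) (R y) (R z)
    have h9 := hcomm (R z) (br (R x) (R y))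
    linear_combination (norm := module) -hl - hl + h9
end

section
/- Let (A, ∗, ⋎₀) be an NS-commutative algebra over a field of characteristic 0. Suppose given families of bilinear maps ≺ᵢ, ≻ᵢ, ⋎ᵢ : A × A → A for i ≥ 0 with x ≻₀ y = x ∗ y, x ≺₀ y = y ∗ x and ⋎₀ the given operation, such that for every n ≥ 0 and all x, y, z ∈ A (writing x ⊙ⱼ y = x ≺ⱼ y + x ≻ⱼ y + x ⋎ⱼ y): Σ_{i+j=n} (x ≺ᵢ y) ≺ⱼ z = Σ_{i+j=n} x ≺ᵢ (y ⊙ⱼ z); Σ_{i+j=n} (x ≻ᵢ y) ≺ⱼ z = Σ_{i+j=n} x ≻ᵢ (y ≺ⱼ z); Σ_{i+j=n} x ≻ᵢ (y ≻ⱼ z) = Σ_{i+j=n} (x ⊙ᵢ y) ≻ⱼ z; and Σ_{i+j=n} [(x ⋎ᵢ y) ≺ⱼ z + (x ⊙ᵢ y) ⋎ⱼ z] = Σ_{i+j=n} [x ≻ᵢ (y ⋎ⱼ z) + x ⋎ᵢ (y ⊙ⱼ z)] (i.e. the induced k[[t]]-bilinear operations make A[[t]] an NS-algebra deformation of (A,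 ∗, ⋎₀)). Define x ⋄ y = x ≻₁ y − y ≺₁ x and x ▪ y = x ⋎₁ y − y ⋎₁ x. Then (A, ∗, ⋎₀, ⋄, ▪) is an NS-Poisson algebra. -/
/-!
Expand the NS-algebra axioms of `A[[t]]` in powers of `t`. The `t¹`-coefficients are linear
relations between products of one zeroth-order and one first-order operation; using that `⋎₀` is
commutative, suitable signed sums of them over permutations of `x, y, z` are exactly NSP1–NSP3.
The `t²`-coefficients, combined in the same way, lose every term containing a second-order
operation, and what remains are the two NS-Lie identities for `⋄` and `▪`.
-/

variable (K : Type*) [Field K] [CharZero K]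
variable {A V : Type*} [AddCommGroup A] [Module K A] [AddCommGroup V] [Module K V]

open Finset

theorem sum_antidiagonal_one {N : Type*} [AddCommMonoid N] (f : ℕ × ℕ → N) :
    ∑ p ∈ antidiagonal 1, f p = f (0, 1) + f (1, 0) := by
  simp [Finset.Nat.sum_antidiagonal_succ]

theorem sum_antidiagonal_two {N : Type*} [AddCommMonoid N] (f : ℕ × ℕ → N) :
    ∑ p ∈ antidiagonal 2, f p = f (0, 2) + f (1, 1) + f (2, 0) := by
  simp [Finset.Nat.sum_antidiagonal_succ, add_assoc]

section Deformation

variable {R M : Type*} [CommSemiring R] [AddCommGroup M] [Module R M]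

/-- `pre`, `suc`, `cur` are the coefficient families of `≺`, `≻`, `⋎`; the field at `n` is the
`tⁿ`-coefficient of the corresponding NS-algebra axiom over `A[[t]]`. -/
structure IsNSDeformation (s c : M →ₗ[R] M →ₗ[R] M) (pre suc cur : ℕ → M →ₗ[R] M →ₗ[R] M) :
    Prop where
  pre_zero : pre 0 = s.flip
  suc_zero : suc 0 = s
  cur_zero : cur 0 = c
  pre_pre (n : ℕ) (x y z : M) :
    ∑ p ∈ antidiagonal n, pre p.2 (pre p.1 x y) z
      = ∑ p ∈ antidiagonal n, pre p.1 x (pre p.2 y z + suc p.2 y z + cur p.2 y z)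
  pre_suc (n : ℕ) (x y z : M) :
    ∑ p ∈ antidiagonal n, pre p.2 (suc p.1 x y) z = ∑ p ∈ antidiagonal n, suc p.1 x (pre p.2 y z)
  suc_suc (n : ℕ) (x y z : M) :
    ∑ p ∈ antidiagonal n, suc p.1 x (suc p.2 y z)
      = ∑ p ∈ antidiagonal n, suc p.2 (pre p.1 x y + suc p.1 x y + cur p.1 x y) z
  cur_mixed (n : ℕ) (x y z : M) :
    ∑ p ∈ antidiagonal n,
        (pre p.2 (cur p.1 x y) z + cur p.2 (pre p.1 x y + suc p.1 x y + cur p.1 x y) z)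
      = ∑ p ∈ antidiagonal n,
          (suc p.1 x (cur p.2 y z) + cur p.1 x (pre p.2 y z + suc p.2 y z + cur p.2 y z))

theorem LinearMap.sub_flip_apply_swap {N : Type*} [AddCommGroup N] [Module R N]
    (f : M →ₗ[R] M →ₗ[R] N) (x y : M) :
    (f - f.flip) x y = -(f - f.flip) y x := by
  simp only [LinearMap.sub_apply, LinearMap.flip_apply, neg_sub]

variable {s c d b : M →ₗ[R] M →ₗ[R] M} {pre suc cur : ℕ → M →ₗ[R] M →ₗ[R] M}

namespace IsNSDeformation

theorem nsLie_left (hD : IsNSDeformation s c pre suc cur) (hc : ∀ x y, c x y = c y x)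
    (hd : ∀ x y, d x y = suc 1 x y - pre 1 y x) (hb : ∀ x y, b x y = cur 1 x y - cur 1 y x)
    (x y z : M) :
    d x (d y z) - d (d x y) z - d y (d x z) + d (d y x) z = d (b x y) z := by
  have A1 := hD.pre_pre 2 z x y; have A2 := hD.pre_pre 2 z y x
  have B1 := hD.pre_suc 2 x z y; have B2 := hD.pre_suc 2 y z x
  have C1 := hD.suc_suc 2 x y z; have C2 := hD.suc_suc 2 y x z
  simp only [hd, hb, sum_antidiagonal_two, hD.pre_zero, hD.suc_zero, hD.cur_zero,
    LinearMap.flip_apply, LinearMap.add_apply, map_add, map_sub, LinearMap.sub_apply, hc]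
    at A1 A2 B1 B2 C1 C2 ⊢
  linear_combination (norm := abel1) -A1 + A2 + B1 - B2 + C1 - C2

theorem nsLie_cyclic (hD : IsNSDeformation s c pre suc cur) (hc : ∀ x y, c x y = c y x)
    (hd : ∀ x y, d x y = suc 1 x y - pre 1 y x) (hb : ∀ x y, b x y = cur 1 x y - cur 1 y x)
    (x y z : M) :
    b x (d y z - d z y + b y z) + b y (d z x - d x z + b z x) + b z (d x y - d y x + b x y)
      + d x (b y z) + d y (b z x) + d z (b x y) = 0 := by
  have D1 := hD.cur_mixed 2 x y z; have D2 := hD.cur_mixed 2 x z y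
  have D3 := hD.cur_mixed 2 y x z; have D4 := hD.cur_mixed 2 y z x
  have D5 := hD.cur_mixed 2 z x y; have D6 := hD.cur_mixed 2 z y x
  simp only [hd, hb, sum_antidiagonal_two, hD.pre_zero, hD.suc_zero, hD.cur_zero,
    LinearMap.flip_apply, LinearMap.add_apply, map_add, map_sub, LinearMap.sub_apply, hc]
    at D1 D2 D3 D4 D5 D6 ⊢
  linear_combination (norm := abel1) -D1 + D2 + D3 - D4 - D5 + D6

theorem nsp1 (hD : IsNSDeformation s c pre suc cur) (hc : ∀ x y, c x y = c y x)
    (hd : ∀ x y, d x y = suc 1 x y - pre 1 y x) (hb : ∀ x y, b x y = cur 1 x y - cur 1 y x)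
    (x y z : M) :
    s (d x y - d y x + b x y) z = d x (s y z) - s y (d x z) := by
  have A1 := hD.pre_pre 1 z x y; have A2 := hD.pre_pre 1 z y x; have B1 := hD.pre_suc 1 x z y
  simp only [hd, hb, sum_antidiagonal_one, hD.pre_zero, hD.suc_zero, hD.cur_zero,
    LinearMap.flip_apply, LinearMap.add_apply, map_add, map_sub, LinearMap.sub_apply, hc]
    at A1 A2 B1 ⊢
  linear_combination (norm := abel1) -A1 + A2 + B1

theorem nsp2 (hD : IsNSDeformation s c pre suc cur)
    (hd : ∀ x y, d x y = suc 1 x y - pre 1 y x) (x y z : M) :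
    d (s x y + s y x + c x y) z = s x (d y z) + s y (d x z) := by
  have A1 := hD.pre_pre 1 z x y; have B1 := hD.pre_suc 1 x z y; have C1 := hD.suc_suc 1 x y z
  simp only [hd, sum_antidiagonal_one, hD.pre_zero, hD.suc_zero, hD.cur_zero,
    LinearMap.flip_apply, LinearMap.add_apply, map_add, map_sub]
    at A1 B1 C1 ⊢
  linear_combination (norm := abel1) A1 - B1 - C1

theorem nsp3 (hD : IsNSDeformation s c pre suc cur) (hc : ∀ x y, c x y = c y x)
    (hd : ∀ x y, d x y = suc 1 x y - pre 1 y x) (hb : ∀ x y, b x y = cur 1 x y - cur 1 y x)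
    (x y z : M) :
    b x (s y z + s z y + c y z) + d x (c y z)
      = c (d x y - d y x + b x y) z + s z (b x y) + c y (d x z - d z x + b x z) + s y (b x z) := by
  have D1 := hD.cur_mixed 1 x y z; have D2 := hD.cur_mixed 1 y x z; have D3 := hD.cur_mixed 1 y z x
  simp only [hd, hb, sum_antidiagonal_one, hD.pre_zero, hD.suc_zero, hD.cur_zero,
    LinearMap.flip_apply, LinearMap.add_apply, map_add, map_sub, LinearMap.sub_apply, hc]
    at D1 D2 D3 ⊢
  linear_combination (norm := abel1) -D1 + D2 - D3

end IsNSDeformation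

end Deformation

/-- The semi-classical limit of an NS-algebra deformation of an
NS-commutative algebra `(A, ∗, ⋎₀)` is an NS-Poisson algebra, with
`x ⋄ y = x ≻₁ y − y ≺₁ x` and `x ▪ y = x ⋎₁ y − y ⋎₁ x`. -/
theorem NSPoisson_semiclassical (s c : A →ₗ[K] A →ₗ[K] A)
    (hA : IsNSComm K s c)
    (pre suc cur : ℕ → A →ₗ[K] A →ₗ[K] A)
    (hpre0 : pre 0 = s.flip) (hsuc0 : suc 0 = s) (hcur0 : cur 0 = c)
    (h1 : ∀ (n : ℕ) (x y z : A),
      ∑ p ∈ Finset.HasAntidiagonal.antidiagonal n, pre p.2 (pre p.1 x y) z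
        = ∑ p ∈ Finset.HasAntidiagonal.antidiagonal n,
            pre p.1 x (pre p.2 y z + suc p.2 y z + cur p.2 y z))
    (h2 : ∀ (n : ℕ) (x y z : A),
      ∑ p ∈ Finset.HasAntidiagonal.antidiagonal n, pre p.2 (suc p.1 x y) z
        = ∑ p ∈ Finset.HasAntidiagonal.antidiagonal n, suc p.1 x (pre p.2 y z))
    (h3 : ∀ (n : ℕ) (x y z : A),
      ∑ p ∈ Finset.HasAntidiagonal.antidiagonal n, suc p.1 x (suc p.2 y z)
        = ∑ p ∈ Finset.HasAntidiagonal.antidiagonal n,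
            suc p.2 (pre p.1 x y + suc p.1 x y + cur p.1 x y) z)
    (h4 : ∀ (n : ℕ) (x y z : A),
      ∑ p ∈ Finset.HasAntidiagonal.antidiagonal n,
          (pre p.2 (cur p.1 x y) z + cur p.2 (pre p.1 x y + suc p.1 x y + cur p.1 x y) z)
        = ∑ p ∈ Finset.HasAntidiagonal.antidiagonal n,
            (suc p.1 x (cur p.2 y z) + cur p.1 x (pre p.2 y z + suc p.2 y z + cur p.2 y z))) :
    IsNSPoisson K s c (suc 1 - (pre 1).flip) (cur 1 - (cur 1).flip) := by
  have hD : IsNSDeformation s c pre suc cur := ⟨hpre0, hsuc0, hcur0, h1, h2, h3, h4⟩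
  have hc := hA.1
  have hd : ∀ x y, (suc 1 - (pre 1).flip) x y = suc 1 x y - pre 1 y x := fun _ _ ↦ rfl
  have hb : ∀ x y, (cur 1 - (cur 1).flip) x y = cur 1 x y - cur 1 y x := fun _ _ ↦ rfl
  exact ⟨hA, ⟨(cur 1).sub_flip_apply_swap, hD.nsLie_left hc hd hb, hD.nsLie_cyclic hc hd hb⟩,
    hD.nsp1 hc hd hb, hD.nsp2 hd, hD.nsp3 hc hd hb⟩
end

section
/- Let (A, ∗, ⋎, ⋄, ▪) be an NS-F-manifold algebra over a field of characteristic 0. Then A with the product x ⊙ y = x∗y + y∗x + x⋎y and the bracket [x,y] = x⋄y − y⋄x + x▪y is an F-manifold algebra (the sub-adjacent F-manifold algebra of (A, ∗, ⋎, ⋄, ▪)). -/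
variable (K : Type*) [Field K] [CharZero K]
variable {A V : Type*} [AddCommGroup A] [Module K A] [AddCommGroup V] [Module K V]

/-- `P_x(y,z) = {x, y·z} − {x,y}·z − y·{x,z}`. -/
def Pb (m br : A →ₗ[K] A →ₗ[K] A) (x y z : A) : A :=
  br x (m y z) - m (br x y) z - m y (br x z)

/-- An F-manifold algebra structure on `A`: commutative associative product `m`, Lie
bracket `br`, satisfying the Hertling–Manin relation. -/
def IsFMan (m br : A →ₗ[K] A →ₗ[K] A) : Prop :=
  (∀ x y, m x y = m y x) ∧
  (∀ x y z, m (m x y) z = m x (m y z)) ∧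
  (∀ x y, br x y = - br y x) ∧
  (∀ x y z, br x (br y z) + br y (br z x) + br z (br x y) = 0) ∧
  (∀ x y z w, Pb K m br (m x y) z w = m x (Pb K m br y z w) + m y (Pb K m br x z w))

/-- `x ⊙ y = x∗y + y∗x + x⋎y`. -/
def nsOdot (s c : A →ₗ[K] A →ₗ[K] A) (x y : A) : A := s x y + s y x + c x y

/-- `[x,y] = x⋄y − y⋄x + x▪y`. -/
def nsLbr (d b : A →ₗ[K] A →ₗ[K] A) (x y : A) : A := d x y - d y x + b x y

/-- `F₁(x,y,z) = x⋄(y∗z) − y∗(x⋄z) − [x,y]∗z`. -/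
def F1 (s c d b : A →ₗ[K] A →ₗ[K] A) (x y z : A) : A :=
  d x (s y z) - s y (d x z) - s (nsLbr K d b x y) z

/-- `F₂(x,y,z) = x∗(y⋄z) + y∗(x⋄z) − (x⊙y)⋄z`. -/
def F2 (s c d b : A →ₗ[K] A →ₗ[K] A) (x y z : A) : A :=
  s x (d y z) + s y (d x z) - d (nsOdot K s c x y) z

/-- `F₃(x,y,z) = x▪(y⊙z) + x⋄(y⋎z) − z∗(x▪y) − y∗(x▪z) − y⋎[x,z] − [x,y]⋎z`. -/
def F3 (s c d b : A →ₗ[K] A →ₗ[K] A) (x y z : A) : A :=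
  b x (nsOdot K s c y z) + d x (c y z) - s z (b x y) - s y (b x z)
    - c y (nsLbr K d b x z) - c (nsLbr K d b x y) z

/-- An NS-F-manifold algebra structure on `A`. -/
def IsNSFMan (s c d b : A →ₗ[K] A →ₗ[K] A) : Prop :=
  IsNSComm K s c ∧ IsNSLie K d b ∧
  (∀ x y z w, F1 K s c d b (nsOdot K s c x y) z w
      = s x (F1 K s c d b y z w) + s y (F1 K s c d b x z w)) ∧
  (∀ x y z w,
    s (F1 K s c d b x y z + F1 K s c d b x z y + F2 K s c d b y z x + F3 K s c d b x y z) w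
      = F2 K s c d b y z (s x w) - s x (F2 K s c d b y z w)) ∧
  (∀ x y z w,
    F3 K s c d b (nsOdot K s c x y) z w + F2 K s c d b z w (c y x)
      = s x (F3 K s c d b y z w) + s y (F3 K s c d b x z w)
        + c x (F1 K s c d b y z w + F1 K s c d b y w z
            + F2 K s c d b z w y + F3 K s c d b y z w)
        + c y (F1 K s c d b x z w + F1 K s c d b x w z
            + F2 K s c d b z w x + F3 K s c d b x z w))

set_option maxHeartbeats 2000000

/-- The sub-adjacent structure of an NS-F-manifold algebra, with product
`x ⊙ y = x∗y + y∗x + x⋎y` and bracket `[x,y] = x⋄y − y⋄x + x▪y`, is an F-manifold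
algebra. -/
theorem subadjacent_FMan_of_NSFMan (s c d b : A →ₗ[K] A →ₗ[K] A)
    (h : IsNSFMan K s c d b) :
    IsFMan K (s + s.flip + c) (d - d.flip + b) := by

  obtain ⟨⟨hc, hs1, hs2⟩, ⟨hb, hd1, hd2⟩, h1, h2, h3⟩ := h
  simp only [map_add, map_sub, LinearMap.add_apply, LinearMap.sub_apply] at hs1 hs2 hd1 hd2
  have Pkey : ∀ x y z : A, Pb K (s + s.flip + c) (d - d.flip + b) x y z
      = F1 K s c d b x y z + F1 K s c d b x z y + F2 K s c d b y z x
        + F3 K s c d b x y z := by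
    intro x y z
    simp only [Pb, F1, F2, F3, nsOdot, nsLbr, LinearMap.add_apply, LinearMap.sub_apply,
      LinearMap.flip_apply, map_add, map_sub]
    abel
  refine ⟨fun x y => ?_, fun x y z => ?_, fun x y => ?_, fun x y z => ?_, fun x y z w => ?_⟩
  · simp only [LinearMap.add_apply, LinearMap.flip_apply]
    linear_combination (norm := abel1) hc x y
  · have e1 : s (c z x) y = s (c x z) y := by rw [hc z x]
    have e2 : s (c z y) x = s (c y z) x := by rw [hc z y]
    have e6 : s x (c z y) = s x (c y z) := by rw [hc z y]
    have e7 : c x (c z y) = c x (c y z) := by rw [hc z y]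
    simp only [LinearMap.add_apply, LinearMap.flip_apply, map_add]
    linear_combination (norm := abel1) (-(hs1 x y z)) + hs1 z x y - hs1 x z y + hs1 z y x
      + hs2 z x y + e1 + e2 + hc (s x y) z + hc (s y x) z + hc (c x y) z + e6 + e7
  · simp only [LinearMap.sub_apply, LinearMap.add_apply, LinearMap.flip_apply]
    linear_combination (norm := abel1) hb x y
  · simp only [LinearMap.sub_apply, LinearMap.add_apply, LinearMap.flip_apply, map_add, map_sub]
    linear_combination (norm := abel1) hd2 x y z + hd1 y z x + hd1 z x y + hd1 x y z
  · have ha := h1 x y z w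
    have hbb := h1 x y w z
    have hcc := h3 x y z w
    have hdd := h2 y z w x
    have hee := h2 x z w y
    have fix : F2 K s c d b z w (c x y) = F2 K s c d b z w (c y x) := by rw [hc x y]
    simp only [Pkey]
    simp only [F1, F2, F3, nsOdot, nsLbr, map_add, map_sub, LinearMap.add_apply,
      LinearMap.sub_apply, LinearMap.flip_apply] at ha hbb hcc hdd hee fix ⊢
    linear_combination (norm := abel1) ha + hbb + hcc - hdd - hee + fix
end

section
/- Let (A, ∗, ⋎, ⋄, ▪) be an NS-F-manifold algebra over a field of characteristic 0 with sub-adjacent F-manifold algebra A^c = (A, ⊙, [-,-]), where x ⊙ y = x∗y + y∗x + x⋎y and [x,y] = x⋄y − y⋄x + x▪y. Define μ, ρ : A → End(A) by μ_x(y) = x ∗ y and ρ_x(y) = x ⋄ y. Then (A, μ, ρ) is a representation of the F-manifold algebra A^c. -/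
variable (K : Type*) [Field K] [CharZero K]
variable {A V : Type*} [AddCommGroup A] [Module K A] [AddCommGroup V] [Module K V]

/-- `R_{μ,ρ}(x,y) = ρ_x∘μ_y − μ_y∘ρ_x − μ_{{x,y}}`, applied to `v`. -/
def Rmr (m br : A →ₗ[K] A →ₗ[K] A) (μ ρ : A →ₗ[K] V →ₗ[K] V) (x y : A) (v : V) : V :=
  ρ x (μ y v) - μ y (ρ x v) - μ (br x y) v

/-- `S_{μ,ρ}(x,y) = μ_x∘ρ_y + μ_y∘ρ_x − ρ_{x·y}`, applied to `v`. -/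
def Smr (m br : A →ₗ[K] A →ₗ[K] A) (μ ρ : A →ₗ[K] V →ₗ[K] V) (x y : A) (v : V) : V :=
  μ x (ρ y v) + μ y (ρ x v) - ρ (m x y) v

/-- A representation `(V, μ, ρ)` of the F-manifold algebra `(A, m, br)`. -/
def IsFManRep (m br : A →ₗ[K] A →ₗ[K] A) (μ ρ : A →ₗ[K] V →ₗ[K] V) : Prop :=
  (∀ x y v, μ (m x y) v = μ x (μ y v)) ∧
  (∀ x y v, ρ (br x y) v = ρ x (ρ y v) - ρ y (ρ x v)) ∧
  (∀ x y z v, Rmr K m br μ ρ (m x y) z v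
      = μ x (Rmr K m br μ ρ y z v) + μ y (Rmr K m br μ ρ x z v)) ∧
  (∀ x y z v, μ (Pb K m br x y z) v
      = Smr K m br μ ρ y z (μ x v) - μ x (Smr K m br μ ρ y z v))

/-- For an NS-F-manifold algebra `(A, s, c, d, b)`, the maps
`μ_x(y) = x ∗ y` and `ρ_x(y) = x ⋄ y` define a representation of the sub-adjacent
F-manifold algebra `(A, ⊙, [-,-])` on `A` itself. -/
theorem rep_of_NSFMan (s c d b : A →ₗ[K] A →ₗ[K] A)
    (h : IsNSFMan K s c d b) :
    IsFManRep K (s + s.flip + c) (d - d.flip + b) s d := by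
  obtain ⟨⟨hc, hs2, hs3⟩, ⟨hb, hd2, hd3⟩, h1, h2, h3⟩ := h
  refine ⟨?_, ?_, ?_, ?_⟩
  · intro x y v
    simpa [LinearMap.add_apply, LinearMap.flip_apply] using (hs2 x y v).symm
  · intro x y v
    have hh := hd2 x y v
    simp only [LinearMap.sub_apply, LinearMap.add_apply, LinearMap.flip_apply, map_add,
      map_sub]
    rw [← hh]; abel
  · intro x y z v
    have hh := h1 x y z v
    simp only [Rmr, F1, nsLbr, nsOdot, LinearMap.add_apply, LinearMap.sub_apply,
      LinearMap.flip_apply] at hh ⊢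
    exact hh
  · intro x y z v
    have key : Pb K (s + s.flip + c) (d - d.flip + b) x y z
        = F1 K s c d b x y z + F1 K s c d b x z y + F2 K s c d b y z x
          + F3 K s c d b x y z := by
      simp only [Pb, F1, F2, F3, nsLbr, nsOdot, LinearMap.add_apply, LinearMap.sub_apply,
        LinearMap.flip_apply, map_add, map_sub]
      abel
    have hh := h2 x y z v
    simp only [Smr, F2, nsOdot, LinearMap.add_apply, LinearMap.sub_apply,
      LinearMap.flip_apply] at hh ⊢
    rw [key]
    exact hh
end

section
/- Let (A, ·, {-,-}) be an F-manifold algebra over a field of characteristic 0 and let N : A → A be a Nijenhuis operator on it. Define bilinear operations x ∗ y = N(x)·y, x ⋎ y = −N(x·y), x ⋄ y = {N(x), y} and x ▪ y = −N{x,y} for x, y ∈ A. Then (A, ∗, ⋎, ⋄, ▪) is an NS-F-manifold algebra. -/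
set_option maxHeartbeats 16000000
set_option maxRecDepth 4000


variable (K : Type*) [Field K] [CharZero K]
variable {A V : Type*} [AddCommGroup A] [Module K A] [AddCommGroup V] [Module K V]

/-- A Nijenhuis operator on an F-manifold algebra induces an
NS-F-manifold algebra with `x ∗ y = N(x)·y`, `x ⋎ y = −N(x·y)`, `x ⋄ y = {N(x),y}` and
`x ▪ y = −N{x,y}`. -/
theorem NSFMan_of_nijenhuis (m br : A →ₗ[K] A →ₗ[K] A)
    (hF : IsFMan K m br) (N : A →ₗ[K] A)
    (hN1 : ∀ x y, m (N x) (N y) = N (m (N x) y + m x (N y) - N (m x y)))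
    (hN2 : ∀ x y, br (N x) (N y) = N (br (N x) y + br x (N y) - N (br x y))) :
    IsNSFMan K (m.comp N) (-(m.compr₂ N)) (br.comp N) (-(br.compr₂ N)) := by
  obtain ⟨hmc, hma, hbs, hjac, hhm⟩ := hF
  have hmlc : ∀ a b c : A, m a (m b c) = m b (m a c) := fun a b c => by
    rw [← hma, hmc a b, hma]
  have hN1c : ∀ u v r : A, m (N u) (m (N v) r)
      = m (N (m (N u) v + m u (N v) - N (m u v))) r := fun u v r => by
    rw [← hma, hN1]
  refine ⟨⟨?_, ?_, ?_⟩, ⟨?_, ?_, ?_⟩, ?_, ?_, ?_⟩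
  · intro x y
    linear_combination (norm := (simp only [Pb, F1, F2, F3, nsOdot, nsLbr, LinearMap.comp_apply, LinearMap.compr₂_apply, LinearMap.neg_apply, LinearMap.add_apply, LinearMap.sub_apply, map_add, map_sub, map_neg, map_zero]; abel)) (congrArg (fun u => (N u)) (hmc y x))
  · intro x y z
    linear_combination (norm := (simp only [Pb, F1, F2, F3, nsOdot, nsLbr, LinearMap.comp_apply, LinearMap.compr₂_apply, LinearMap.neg_apply, LinearMap.add_apply, LinearMap.sub_apply, map_add, map_sub, map_neg, map_zero]; abel)) (hN1c x y z) + (congrArg (fun u => (m (N u) z)) (hmc x (N y)))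
  · intro x y z
    linear_combination (norm := (simp only [Pb, F1, F2, F3, nsOdot, nsLbr, LinearMap.comp_apply, LinearMap.compr₂_apply, LinearMap.neg_apply, LinearMap.add_apply, LinearMap.sub_apply, map_add, map_sub, map_neg, map_zero]; abel)) -(congrArg (fun u => (N u)) (hmlc x (N y) z)) - (congrArg (fun u => (N u)) (hmlc x (N z) y)) + (congrArg (fun u => (N u)) (hmlc y (N x) z)) + (congrArg (fun u => (N u)) (hmlc y (N z) x)) + (congrArg (fun u => (N (m (N z) u))) (hmc y x)) - (hN1 x (m y z)) + (hN1 y (m x z)) - (congrArg (fun u => (N (N u))) (hmlc y x z))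
  · intro x y
    linear_combination (norm := (simp only [Pb, F1, F2, F3, nsOdot, nsLbr, LinearMap.comp_apply, LinearMap.compr₂_apply, LinearMap.neg_apply, LinearMap.add_apply, LinearMap.sub_apply, map_add, map_sub, map_neg, map_zero]; abel)) -(congrArg (fun u => (N u)) (hbs y x))
  · intro x y z
    linear_combination (norm := (simp only [Pb, F1, F2, F3, nsOdot, nsLbr, LinearMap.comp_apply, LinearMap.compr₂_apply, LinearMap.neg_apply, LinearMap.add_apply, LinearMap.sub_apply, map_add, map_sub, map_neg, map_zero]; abel)) (hjac (N x) (N y) z) - (congrArg (fun u => (br (N y) u)) (hbs z (N x))) - (congrArg (fun u => (br z u)) (hN2 x y)) + (hbs z (N (N (br x y)))) - (hbs z (N (br (N x) y))) - (congrArg (fun u => (br z (N u))) (hbs x (N y))) + (hbs z (N (br (N y) x)))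
  · intro x y z
    linear_combination (norm := (simp only [Pb, F1, F2, F3, nsOdot, nsLbr, LinearMap.comp_apply, LinearMap.compr₂_apply, LinearMap.neg_apply, LinearMap.add_apply, LinearMap.sub_apply, map_add, map_sub, map_neg, map_zero]; abel)) -(hN2 x (br y z)) - (hN2 y (br z x)) - (congrArg (fun u => (N (br (N y) u))) (hbs z x)) - (hN2 z (br x y)) + (congrArg (fun u => (N (N u))) (hjac x y z)) - (congrArg (fun u => (N u)) (hjac x y (N z))) + (congrArg (fun u => (N (br x u))) (hbs y (N z))) + (congrArg (fun u => (N u)) (hjac x z (N y))) - (congrArg (fun u => (N (br x u))) (hbs z (N y))) - (congrArg (fun u => (N u)) (hjac y z (N x))) + (congrArg (fun u => (N (br y u))) (hbs z (N x)))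
  · intro x y z w
    linear_combination (norm := (simp only [Pb, F1, F2, F3, nsOdot, nsLbr, LinearMap.comp_apply, LinearMap.compr₂_apply, LinearMap.neg_apply, LinearMap.add_apply, LinearMap.sub_apply, map_add, map_sub, map_neg, map_zero]; abel)) -(hN1c x (br (N z) y) w) - (hN1c y (br (N z) x) w) - (congrArg (fun u => (m (N u) w)) (hN2 z (m x y))) - (congrArg (fun u => (m (N (N u)) w)) (hbs z (N (m x y)))) + (hhm (N x) (N y) (N z) w) - (congrArg (fun u => (m (N x) (m u w))) (hN2 y z)) - (hN1c x (br y (N z)) w) + (congrArg (fun u => (m (N (N (m x u))) w)) (hbs y (N z))) - (congrArg (fun u => (m (N y) (m u w))) (hN2 x z)) - (hN1c y (br x (N z)) w) + (congrArg (fun u => (m (N (N (m y u))) w)) (hbs x (N z))) + (congrArg (fun u => (m (N z) (br u w))) (hN1 x y)) + (congrArg (fun u => (m (N z) (br (N u) w))) (hmc x (N y))) - (congrArg (fun u => (m (N (m (N x) u)) w)) (hbs y (N z))) - (congrArg (fun u => (m (N (m (N y) u)) w)) (hbs x (N z))) - (congrArg (fun u => (m (N (m x (N u))) w)) (hbs y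 (N z))) - (congrArg (fun u => (m (N (m y (N u))) w)) (hbs x (N z))) + (congrArg (fun u => (m (br u (N z)) w)) (hN1 x y)) - (congrArg (fun u => (m u w)) (hN2 (N (m x y)) z)) - (congrArg (fun u => (m (N u) w)) (hN2 (m x y) z)) + (congrArg (fun u => (m (N (N (N u))) w)) (hbs (m x y) z)) - (congrArg (fun u => (m (N (N u)) w)) (hbs (m x y) (N z))) + (congrArg (fun u => (m u w)) (hN2 (m (N x) y) z)) + (congrArg (fun u => (m (N u) w)) (hbs (m (N x) y) (N z))) + (congrArg (fun u => (m u w)) (hN2 (m x (N y)) z)) - (congrArg (fun u => (m (N (N (br u z))) w)) (hmc x (N y))) + (congrArg (fun u => (m (N (br (N u) z)) w)) (hmc x (N y))) + (congrArg (fun u => (m (N (br u (N z))) w)) (hmc x (N y))) + (congrArg (fun u => (m (N u) w)) (hbs (m (N y) x) (N z))) - (congrArg (fun u => (br u (m (N z) w))) (hN1 x y)) - (congrArg (fun u => (br (N u) (m (N z) w))) (hmc x (N y)))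
  · intro x y z w
    linear_combination (norm := (simp only [Pb, F1, F2, F3, nsOdot, nsLbr, LinearMap.comp_apply, LinearMap.compr₂_apply, LinearMap.neg_apply, LinearMap.add_apply, LinearMap.sub_apply, map_add, map_sub, map_neg, map_zero]; abel)) (congrArg (fun u => (m (N (N u)) w)) (hmc (br (N x) y) z)) - (congrArg (fun u => (m (N (N u)) w)) (hmc (br (N y) x) z)) + (hN1c x y (br (N z) w)) + (congrArg (fun u => (m (N u) w)) (hN1 y (br x z))) + (congrArg (fun u => (m (N u) w)) (hN1 z (br x y))) + (congrArg (fun u => (m (N (N u)) w)) (hmc z (N (br x y)))) + (congrArg (fun u => (m (N u) (br (N z) w))) (hmc x (N y))) - (congrArg (fun u => (m (N u) w)) (hN2 x (m y z))) - (hhm (N x) w (N y) (N z)) + (hN1c x y (br w (N z))) - (congrArg (fun u => (m (N (N (m x y))) u)) (hbs w (N z))) + (congrArg (fun u => (m (N x) (m u (N z)))) (hbs w (N y))) - (congrArg (fun u => (m (N x) u)) (hmc (br (N y) w) (N z))) - (congrArg (fun u => (m (N x) (br w u))) (hN1 y z)) + (congrArg (fun u => (m (N x) u)) (hbs w (N (N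 (m y z))))) - (congrArg (fun u => (m (N x) u)) (hbs w (N (m (N y) z)))) - (congrArg (fun u => (m (N x) (br w (N u)))) (hmc y (N z))) - (congrArg (fun u => (m (N x) u)) (hbs w (N (m (N z) y)))) - (congrArg (fun u => (m (N y) u)) (hbs (m (N x) w) (N z))) + (congrArg (fun u => (m (N (m (N x) y)) u)) (hbs w (N z))) + (congrArg (fun u => (m (N u) (br w (N z)))) (hmc x (N y))) + (congrArg (fun u => (m (N (m (N y) x)) u)) (hbs w (N z))) + (congrArg (fun u => (m w (m (N y) u))) (hN2 x z)) - (congrArg (fun u => (m w u)) (hN1 y (N (br x z)))) - (congrArg (fun u => (m w (N u))) (hN1 y (br x z))) + (hmc w (N (N (N (m y (br x z)))))) - (hmc w (N (N (m (N y) (br x z))))) - (congrArg (fun u => (m w (N u))) (hmc y (N (N (br x z))))) - (hmc w (N (m (N (N (br x z))) y))) + (congrArg (fun u => (m w u)) (hN1 y (br (N x) z))) - (hmc w (N (N (m y (br (N x) z))))) + (hmc w (N (m (N y) (br (N x) z)))) + (congrArg (fun u => (m w (N u))) (hmc y (N (br (N x) z)))) + (hmc w (N (m (N (br (N x) z)) y)))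 + (congrArg (fun u => (m w u)) (hN1 y (br x (N z)))) - (congrArg (fun u => (m w (N (N (m y u))))) (hbs x (N z))) + (hmc w (N (N (m y (br (N z) x))))) + (congrArg (fun u => (m w (N (m (N y) u)))) (hbs x (N z))) - (hmc w (N (m (N y) (br (N z) x)))) + (congrArg (fun u => (m w (N (m y (N u))))) (hbs x (N z))) - (congrArg (fun u => (m w (N u))) (hmc y (N (br (N z) x)))) - (hmc w (N (m (N (br (N z) x)) y))) + (congrArg (fun u => (m w (m u (N z)))) (hN2 x y)) - (congrArg (fun u => (m w u)) (hN1 (N (br x y)) z)) - (hmc w (N (m (N (N (br x y))) z))) - (congrArg (fun u => (m w (N u))) (hN1 (br x y) z)) + (congrArg (fun u => (m w (N (N (N u))))) (hmc (br x y) z)) + (hmc w (N (N (N (m z (br x y)))))) - (congrArg (fun u => (m w (N (N u)))) (hmc (br x y) (N z))) - (hmc w (N (N (m (N z) (br x y))))) + (congrArg (fun u => (m w u)) (hN1 (br (N x) y) z)) - (congrArg (fun u => (m w (N (N u)))) (hmc (br (N x) y) z)) - (hmc w (N (N (m z (br (N x) y))))) + (hmc w (N (m (N (br (N x) y)) z)))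 + (congrArg (fun u => (m w (N u))) (hmc (br (N x) y) (N z))) + (hmc w (N (m (N z) (br (N x) y)))) + (congrArg (fun u => (m w u)) (hN1 (br x (N y)) z)) - (congrArg (fun u => (m w (N (N (m u z))))) (hbs x (N y))) + (congrArg (fun u => (m w (N (N u)))) (hmc (br (N y) x) z)) + (hmc w (N (N (m z (br (N y) x))))) + (congrArg (fun u => (m w (N (m (N u) z)))) (hbs x (N y))) - (hmc w (N (m (N (br (N y) x)) z))) + (congrArg (fun u => (m w (N (m u (N z))))) (hbs x (N y))) - (congrArg (fun u => (m w (N u))) (hmc (br (N y) x) (N z))) - (hmc w (N (m (N z) (br (N y) x)))) - (congrArg (fun u => (m w (br (N x) u))) (hN1 y z)) + (congrArg (fun u => (m w u)) (hN2 x (N (m y z)))) + (congrArg (fun u => (m w (N u))) (hN2 x (m y z))) - (hmc w (N (N (N (br x (m y z)))))) + (hmc w (N (N (br (N x) (m y z))))) + (congrArg (fun u => (m w (N u))) (hbs x (N (N (m y z))))) - (hmc w (N (br (N (N (m y z))) x))) - (congrArg (fun u => (m w u)) (hN2 x (m (N y) z))) + (hmc w (N (N (br x (m (N y) z))))) - (hmc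 w (N (br (N x) (m (N y) z)))) - (congrArg (fun u => (m w (N u))) (hbs x (N (m (N y) z)))) + (hmc w (N (br (N (m (N y) z)) x))) - (congrArg (fun u => (m w u)) (hN2 x (m y (N z)))) + (congrArg (fun u => (m w (N (N (br x u))))) (hmc y (N z))) + (hmc w (N (N (br x (m (N z) y))))) - (congrArg (fun u => (m w (N (br (N x) u)))) (hmc y (N z))) - (hmc w (N (br (N x) (m (N z) y)))) - (congrArg (fun u => (m w (N (br x (N u))))) (hmc y (N z))) - (congrArg (fun u => (m w (N u))) (hbs x (N (m (N z) y)))) + (hmc w (N (br (N (m (N z) y)) x))) - (congrArg (fun u => (m u (N z))) (hbs (m (N x) w) (N y))) + (hmc (br (N y) (m (N x) w)) (N z)) + (congrArg (fun u => (br (m (N x) w) u)) (hN1 y z)) - (hbs (m (N x) w) (N (N (m y z)))) + (hbs (m (N x) w) (N (m (N y) z))) + (congrArg (fun u => (br (m (N x) w) (N u))) (hmc y (N z))) + (hbs (m (N x) w) (N (m (N z) y)))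
  · intro x y z w
    linear_combination (norm := (simp only [Pb, F1, F2, F3, nsOdot, nsLbr, LinearMap.comp_apply, LinearMap.compr₂_apply, LinearMap.neg_apply, LinearMap.add_apply, LinearMap.sub_apply, map_add, map_sub, map_neg, map_zero]; abel)) -(congrArg (fun u => (N (m (N u) w))) (hbs (m (N x) y) z)) - (congrArg (fun u => (N (m (N u) w))) (hbs (m (N y) x) z)) + (congrArg (fun u => (N (m x (m (N (N u)) z)))) (hbs y w)) + (congrArg (fun u => (N (m x (br (N (N u)) y)))) (hmc z w)) - (congrArg (fun u => (N (m x u))) (hN2 y (m z w))) + (congrArg (fun u => (N (m y (m (N (N u)) z)))) (hbs x w)) + (congrArg (fun u => (N (m y (br (N (N u)) x)))) (hmc z w)) - (congrArg (fun u => (N (m y u))) (hN2 x (m z w))) + (congrArg (fun u => (N (m z u))) (hN2 w (m x y))) + (congrArg (fun u => (N (m u w))) (hN2 z (m x y))) + (congrArg (fun u => (N (m (N u) w))) (hbs z (N (m x y)))) - (congrArg (fun u => (N u)) (hmc (br (N z) (m (N x) y)) w)) - (congrArg (fun u => (N u)) (hmc (br (N z) (m (N y) x)) w)) + (congrArg (fun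 u => (N (N (N (br (m x y) u))))) (hmc z w)) + (congrArg (fun u => (N (N (N u)))) (hbs (m x y) (m w z))) - (congrArg (fun u => (N (N (br (N (m x y)) u)))) (hmc z w)) - (hN1 w (br (N (m x y)) z)) + (hN1 w (br (m (N x) y) z)) - (congrArg (fun u => (N (N (m w u)))) (hbs (m (N x) y) z)) + (congrArg (fun u => (N (m (N w) u))) (hbs (m (N x) y) z)) + (congrArg (fun u => (N (m w (N u)))) (hbs (m (N x) y) z)) - (congrArg (fun u => (N u)) (hmc w (N (br z (m (N x) y))))) + (hN1 w (br (m (N y) x) z)) - (congrArg (fun u => (N (N (m w u)))) (hbs (m (N y) x) z)) + (congrArg (fun u => (N (m (N w) u))) (hbs (m (N y) x) z)) + (congrArg (fun u => (N (m w (N u)))) (hbs (m (N y) x) z)) - (congrArg (fun u => (N u)) (hmc w (N (br z (m (N y) x))))) - (congrArg (fun u => (m (N w) u)) (hN2 z (m y x))) + (hN1 w (N (br z (m y x)))) + (congrArg (fun u => (N u)) (hN1 w (br z (m y x)))) - (congrArg (fun u => (N (N (N (m w (br z u)))))) (hmc y x)) + (congrArg (fun u => (N (N (m (N w) (br z u)))))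 (hmc y x)) + (congrArg (fun u => (N (m w (N (N (br z u)))))) (hmc y x)) + (congrArg (fun u => (N u)) (hmc w (N (N (br z (m x y)))))) - (hN1 w (br (N z) (m y x))) + (congrArg (fun u => (N (N (m w (br (N z) u))))) (hmc y x)) - (congrArg (fun u => (N (m (N w) (br (N z) u)))) (hmc y x)) - (congrArg (fun u => (N (m w (N (br (N z) u))))) (hmc y x)) - (congrArg (fun u => (N u)) (hmc w (N (br (N z) (m x y))))) - (hN1 w (br z (N (m y x)))) + (congrArg (fun u => (N (N (m w (br z (N u)))))) (hmc y x)) + (congrArg (fun u => (N (N (m w u)))) (hbs z (N (m x y)))) - (congrArg (fun u => (N (m (N w) (br z (N u))))) (hmc y x)) - (congrArg (fun u => (N (m (N w) u))) (hbs z (N (m x y)))) - (congrArg (fun u => (N (m w (N (br z (N u)))))) (hmc y x)) - (congrArg (fun u => (N (m w (N u)))) (hbs z (N (m x y)))) + (hN1 x (m (N (br y z)) w)) + (hN1 x (m z (N (br y w)))) + (hN1 x (m z (br (N w) y))) - (hN1 x (m z (br (N y) w))) - (hN1 x (m (br (N y) z) w)) + (hN1 x (m (br (N z) y) w)) - (congrArg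 (fun u => (N (N (m x u)))) (hmc (br (N z) y) w)) + (congrArg (fun u => (N (m (N x) u))) (hmc (br (N z) y) w)) + (hN1 x (br y (m (N w) z))) + (hN1 x (br y (m (N z) w))) - (hN1c x w (N (br y z))) + (hN1 (N (m x w)) (br y z)) + (congrArg (fun u => (N u)) (hN1 (m x w) (br y z))) - (congrArg (fun u => (N (N (N u)))) (hma x w (br y z))) + (congrArg (fun u => (N (N u))) (hma x w (N (br y z)))) + (congrArg (fun u => (N (N (m x u)))) (hmc w (N (br y z)))) - (hN1c x z (N (br y w))) + (hN1 (N (m x z)) (br y w)) + (congrArg (fun u => (N (m (N (N (m x z))) u))) (hbs y w)) + (congrArg (fun u => (N u)) (hN1 (m x z) (br y w))) - (congrArg (fun u => (N (N (N u)))) (hma x z (br y w))) + (congrArg (fun u => (N (N u))) (hma x z (N (br y w)))) + (congrArg (fun u => (m (N x) u)) (hN2 y (m z w))) - (hN1 x (N (br y (m z w)))) - (congrArg (fun u => (N u)) (hN1 x (br y (m z w)))) + (hN1 x (br (N y) (m z w))) + (hN1 y (m (N (br x z)) w)) + (hN1 y (m z (N (br x w)))) + (hN1 y (m z (br (N w)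 x))) - (hN1 y (m z (br (N x) w))) - (hN1 y (m (br (N x) z) w)) + (hN1 y (m (br (N z) x) w)) - (congrArg (fun u => (N (N (m y u)))) (hmc (br (N z) x) w)) + (congrArg (fun u => (N (m (N y) u))) (hmc (br (N z) x) w)) + (hN1 y (br x (m (N w) z))) + (hN1 y (br x (m (N z) w))) - (hN1c y w (N (br x z))) + (hN1 (N (m y w)) (br x z)) + (congrArg (fun u => (N u)) (hN1 (m y w) (br x z))) - (congrArg (fun u => (N (N (N u)))) (hma y w (br x z))) + (congrArg (fun u => (N (N u))) (hma y w (N (br x z)))) + (congrArg (fun u => (N (N (m y u)))) (hmc w (N (br x z)))) - (hN1c y z (N (br x w))) + (hN1 (N (m y z)) (br x w)) + (congrArg (fun u => (N (m (N (N (m y z))) u))) (hbs x w)) + (congrArg (fun u => (N u)) (hN1 (m y z) (br x w))) - (congrArg (fun u => (N (N (N u)))) (hma y z (br x w))) + (congrArg (fun u => (N (N u))) (hma y z (N (br x w)))) + (congrArg (fun u => (m (N y) u)) (hN2 x (m z w))) - (hN1 y (N (br x (m z w)))) - (congrArg (fun u => (N u)) (hN1 y (br x (m z w)))) + (hN1 y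 (br (N x) (m z w))) - (hN1 z (br (N (m x y)) w)) + (hN1 z (br (m (N x) y) w)) + (congrArg (fun u => (N (m (N z) u))) (hbs (m (N x) y) w)) + (hN1 z (br (m (N y) x) w)) + (congrArg (fun u => (N (m (N z) u))) (hbs (m (N y) x) w)) - (congrArg (fun u => (m (N z) u)) (hN2 w (m y x))) + (hN1 z (N (br w (m y x)))) + (congrArg (fun u => (N u)) (hN1 z (br w (m y x)))) - (congrArg (fun u => (N (N (N (m z (br w u)))))) (hmc y x)) + (congrArg (fun u => (N (N (m (N z) (br w u))))) (hmc y x)) + (congrArg (fun u => (N (m z (N (N (br w u)))))) (hmc y x)) - (hN1 z (br (N w) (m y x))) + (congrArg (fun u => (N (N (m z (br (N w) u))))) (hmc y x)) - (congrArg (fun u => (N (m (N z) (br (N w) u)))) (hmc y x)) - (congrArg (fun u => (N (m z (N (br (N w) u))))) (hmc y x)) - (hN1 z (br w (N (m y x)))) + (congrArg (fun u => (N (N (m z (br w (N u)))))) (hmc y x)) + (congrArg (fun u => (N (N (m z u)))) (hbs w (N (m x y)))) - (congrArg (fun u => (N (m (N z) (br w (N u))))) (hmc y x)) - (congrArg (fun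 u => (N (m (N z) u))) (hbs w (N (m x y)))) - (congrArg (fun u => (N (m z (N (br w (N u)))))) (hmc y x)) - (hN1 (m (N x) w) (br y z)) + (congrArg (fun u => (N (N u))) (hma (N x) w (br y z))) - (congrArg (fun u => (N u)) (hma (N x) w (N (br y z)))) - (congrArg (fun u => (N (m (N x) u))) (hmc w (N (br y z)))) - (hN1 (m (N x) z) (br y w)) + (congrArg (fun u => (N (N u))) (hma (N x) z (br y w))) - (congrArg (fun u => (N (m (N (m (N x) z)) u))) (hbs y w)) - (congrArg (fun u => (N u)) (hma (N x) z (N (br y w)))) - (hN1 (m (N y) w) (br x z)) + (congrArg (fun u => (N (N u))) (hma (N y) w (br x z))) - (congrArg (fun u => (N u)) (hma (N y) w (N (br x z)))) - (congrArg (fun u => (N (m (N y) u))) (hmc w (N (br x z)))) - (hN1 (m (N y) z) (br x w)) + (congrArg (fun u => (N (N u))) (hma (N y) z (br x w))) - (congrArg (fun u => (N (m (N (m (N y) z)) u))) (hbs x w)) - (congrArg (fun u => (N u)) (hma (N y) z (N (br x w)))) - (hN1 (m x (N w)) (br y z)) + (congrArg (fun u => (N (N u))) (hma x (N w) (br y z)))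 - (congrArg (fun u => (N u)) (hma x (N w) (N (br y z)))) - (hN1 (m x (N z)) (br y w)) + (congrArg (fun u => (N (N u))) (hma x (N z) (br y w))) + (congrArg (fun u => (N (N (m x (m (N z) u))))) (hbs y w)) - (congrArg (fun u => (N (m (N u) (br y w)))) (hmc x (N z))) - (congrArg (fun u => (N (m (N (m (N z) x)) u))) (hbs y w)) - (congrArg (fun u => (N u)) (hma x (N z) (N (br y w)))) - (hN1 (m y (N w)) (br x z)) + (congrArg (fun u => (N (N u))) (hma y (N w) (br x z))) - (congrArg (fun u => (N u)) (hma y (N w) (N (br x z)))) - (hN1 (m y (N z)) (br x w)) + (congrArg (fun u => (N (N u))) (hma y (N z) (br x w))) + (congrArg (fun u => (N (N (m y (m (N z) u))))) (hbs x w)) - (congrArg (fun u => (N (m (N u) (br x w)))) (hmc y (N z))) - (congrArg (fun u => (N (m (N (m (N z) y)) u))) (hbs x w)) - (congrArg (fun u => (N u)) (hma y (N z) (N (br x w)))) + (hN2 (N (m x y)) (m z w)) - (hN2 (N (m z w)) (m y x)) - (congrArg (fun u => (N (br (N (N u)) (m y x)))) (hmc z w)) - (congrArg (fun u => (N (br (N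 (N (m w z))) u))) (hmc y x)) - (congrArg (fun u => (N u)) (hN2 (m z w) (m y x))) + (congrArg (fun u => (N (N (N (br u (m y x)))))) (hmc z w)) + (congrArg (fun u => (N (N (N (br (m w z) u))))) (hmc y x)) - (congrArg (fun u => (N (N (br u (N (m y x)))))) (hmc z w)) - (congrArg (fun u => (N (N (br (m w z) (N u))))) (hmc y x)) - (congrArg (fun u => (N (N u))) (hbs (m w z) (N (m x y)))) + (hN2 (m (N w) z) (m y x)) - (congrArg (fun u => (N (N (br (m (N w) z) u)))) (hmc y x)) + (congrArg (fun u => (N (br (N (m (N w) z)) u))) (hmc y x)) + (congrArg (fun u => (N (br (m (N w) z) (N u)))) (hmc y x)) + (congrArg (fun u => (N u)) (hbs (m (N w) z) (N (m x y)))) - (hN2 (m (N x) y) (m z w)) - (hN2 (m (N y) x) (m z w)) + (hN2 (m (N z) w) (m y x)) - (congrArg (fun u => (N (N (br (m (N z) w) u)))) (hmc y x)) + (congrArg (fun u => (N (br (N (m (N z) w)) u))) (hmc y x)) + (congrArg (fun u => (N (br (m (N z) w) (N u)))) (hmc y x)) + (congrArg (fun u => (N u)) (hbs (m (N z) w) (N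 (m x y)))) - (congrArg (fun u => (N (N (N u)))) (hhm x y z w)) + (congrArg (fun u => (N (N (N (m x u))))) (hmc (br y z) w)) + (congrArg (fun u => (N (N (N (m y u))))) (hmc (br x z) w)) - (congrArg (fun u => (N (N (N (m z u))))) (hbs (m x y) w)) - (congrArg (fun u => (N (N (N (m u w))))) (hbs (m x y) z)) + (congrArg (fun u => (N (N (N u)))) (hmc (br z (m x y)) w)) + (congrArg (fun u => (N (N u))) (hhm x y z (N w))) - (congrArg (fun u => (N (N (m x (m z u))))) (hbs y (N w))) - (congrArg (fun u => (N (N (m x u)))) (hmc (br y z) (N w))) + (congrArg (fun u => (N (N (m x (br y u))))) (hmc z (N w))) - (congrArg (fun u => (N (N (m y (m z u))))) (hbs x (N w))) - (congrArg (fun u => (N (N (m y u)))) (hmc (br x z) (N w))) + (congrArg (fun u => (N (N (m y (br x u))))) (hmc z (N w))) + (congrArg (fun u => (N (N (m z u)))) (hbs (m x y) (N w))) + (congrArg (fun u => (N (N (m u (N w))))) (hbs (m x y) z)) - (congrArg (fun u => (N (N u))) (hmc (br z (m x y)) (N w))) - (congrArg (fun u => (N (N (br (m x y) u)))) (hmc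 z (N w))) - (congrArg (fun u => (N (N u))) (hbs (m x y) (m (N w) z))) + (congrArg (fun u => (N (N u))) (hhm x y w (N z))) + (congrArg (fun u => (N (N (m w u)))) (hbs (m x y) (N z))) - (congrArg (fun u => (N (N (m x (m w u))))) (hbs y (N z))) - (congrArg (fun u => (N (N (m x (m u (N z)))))) (hbs y w)) + (congrArg (fun u => (N (N (m x u)))) (hmc (br w y) (N z))) + (congrArg (fun u => (N (N (m x (br y u))))) (hmc w (N z))) - (congrArg (fun u => (N (N (m y (m w u))))) (hbs x (N z))) - (congrArg (fun u => (N (N (m y (m u (N z)))))) (hbs x w)) + (congrArg (fun u => (N (N (m y u)))) (hmc (br w x) (N z))) + (congrArg (fun u => (N (N (m y (br x u))))) (hmc w (N z))) + (congrArg (fun u => (N (N (m u (N z))))) (hbs (m x y) w)) - (congrArg (fun u => (N (N u))) (hmc (br w (m x y)) (N z))) - (congrArg (fun u => (N (N (br (m x y) u)))) (hmc w (N z))) - (congrArg (fun u => (N (N u))) (hbs (m x y) (m (N z) w))) - (congrArg (fun u => (N u)) (hhm x y (N z) (N w))) - (congrArg (fun u => (N (m (N z) u))) (hbs (m x y) (N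 w))) + (congrArg (fun u => (N (m x (m (N z) u)))) (hbs y (N w))) + (congrArg (fun u => (N (m x (m u (N w))))) (hbs y (N z))) - (congrArg (fun u => (N (m x u))) (hmc (br (N z) y) (N w))) - (congrArg (fun u => (N (m x (br y u)))) (hN1 z w)) + (congrArg (fun u => (N (m x (br y (N (N u)))))) (hmc z w)) + (congrArg (fun u => (N (m x u))) (hbs y (N (N (m w z))))) - (congrArg (fun u => (N (m x u))) (hbs y (N (m (N z) w)))) - (congrArg (fun u => (N (m x (br y (N u))))) (hmc z (N w))) - (congrArg (fun u => (N (m x u))) (hbs y (N (m (N w) z)))) + (congrArg (fun u => (N (m y (m (N z) u)))) (hbs x (N w))) + (congrArg (fun u => (N (m y (m u (N w))))) (hbs x (N z))) - (congrArg (fun u => (N (m y u))) (hmc (br (N z) x) (N w))) - (congrArg (fun u => (N (m y (br x u)))) (hN1 z w)) + (congrArg (fun u => (N (m y (br x (N (N u)))))) (hmc z w)) + (congrArg (fun u => (N (m y u))) (hbs x (N (N (m w z))))) - (congrArg (fun u => (N (m y u))) (hbs x (N (m (N z) w)))) - (congrArg (fun u => (N (m y (br x (N u))))) (hmc z (N w)))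 - (congrArg (fun u => (N (m y u))) (hbs x (N (m (N w) z)))) - (congrArg (fun u => (N (m u (N w)))) (hbs (m x y) (N z))) + (congrArg (fun u => (N u)) (hmc (br (N z) (m x y)) (N w))) + (congrArg (fun u => (N (br (m x y) u))) (hN1 z w)) - (congrArg (fun u => (N (br (m x y) (N (N u))))) (hmc z w)) - (congrArg (fun u => (N u)) (hbs (m x y) (N (N (m w z))))) + (congrArg (fun u => (N u)) (hbs (m x y) (N (m (N z) w)))) + (congrArg (fun u => (N (br (m x y) (N u)))) (hmc z (N w))) + (congrArg (fun u => (N u)) (hbs (m x y) (N (m (N w) z)))) + (congrArg (fun u => (N (N u))) (hhm x (N y) z w)) - (congrArg (fun u => (N (N (m (N y) u)))) (hmc (br x z) w)) + (congrArg (fun u => (N (N (m z (br u w))))) (hmc x (N y))) + (congrArg (fun u => (N (N (m (br u z) w)))) (hmc x (N y))) + (congrArg (fun u => (N (N (m u w)))) (hbs (m (N y) x) z)) - (congrArg (fun u => (N (N u))) (hmc (br z (m (N y) x)) w)) - (congrArg (fun u => (N (N (br u (m z w))))) (hmc x (N y))) - (congrArg (fun u => (N u)) (hhm x (N y) z (N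 w))) + (congrArg (fun u => (N (m (N y) (m z u)))) (hbs x (N w))) + (congrArg (fun u => (N (m (N y) u))) (hmc (br x z) (N w))) + (congrArg (fun u => (N u)) (hN1c y w (br x z))) - (congrArg (fun u => (N (m (N y) (br x u)))) (hmc z (N w))) + (congrArg (fun u => (N (m x (m z u)))) (hN2 y w)) - (congrArg (fun u => (N (m x (m z (N (N u)))))) (hbs y w)) + (congrArg (fun u => (N (m x u))) (hmc z (N (N (br w y))))) + (congrArg (fun u => (N (m x u))) (hmc z (N (br (N y) w)))) + (congrArg (fun u => (N (m x (m z (N u))))) (hbs y (N w))) - (congrArg (fun u => (N (m x u))) (hmc z (N (br (N w) y)))) + (congrArg (fun u => (N (m x u))) (hmc (br (N y) z) (N w))) - (congrArg (fun u => (N (m x (br (N y) u)))) (hmc z (N w))) - (congrArg (fun u => (N (m z (br u (N w))))) (hmc x (N y))) - (congrArg (fun u => (N (m z u))) (hbs (m (N y) x) (N w))) - (congrArg (fun u => (N (m (br u z) (N w)))) (hmc x (N y))) - (congrArg (fun u => (N (m u (N w)))) (hbs (m (N y) x) z)) + (congrArg (fun u => (N u)) (hmc (br z (m (N y) x)) (N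 w))) + (congrArg (fun u => (N (br u (m z (N w))))) (hmc x (N y))) + (congrArg (fun u => (N (br (m (N y) x) u))) (hmc z (N w))) - (congrArg (fun u => (N u)) (hhm x (N y) w (N z))) + (congrArg (fun u => (N (m (N y) (m w u)))) (hbs x (N z))) + (congrArg (fun u => (N (m (N y) (m u (N z))))) (hbs x w)) - (congrArg (fun u => (N (m (N y) u))) (hmc (br w x) (N z))) - (congrArg (fun u => (N u)) (hN1c y z (br w x))) - (congrArg (fun u => (N (m (N y) (br x u)))) (hmc w (N z))) - (congrArg (fun u => (N (m (N u) (br w x)))) (hmc y (N z))) - (congrArg (fun u => (N (m w (br u (N z))))) (hmc x (N y))) - (congrArg (fun u => (N (m w u))) (hbs (m (N y) x) (N z))) + (congrArg (fun u => (N (m x (m w u)))) (hN2 y z)) - (congrArg (fun u => (N (m x u))) (hmc w (N (N (br y z))))) + (congrArg (fun u => (N (m x u))) (hmc w (N (br (N y) z)))) + (congrArg (fun u => (N (m x (m w (N u))))) (hbs y (N z))) - (congrArg (fun u => (N (m x u))) (hmc w (N (br (N z) y)))) + (congrArg (fun u => (N (m x u))) (hmc (br (N y) w) (N z))) - (congrArg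 (fun u => (N (m x (br (N y) u)))) (hmc w (N z))) - (congrArg (fun u => (N (m (br u w) (N z)))) (hmc x (N y))) - (congrArg (fun u => (N (m u (N z)))) (hbs (m (N y) x) w)) + (congrArg (fun u => (N u)) (hmc (br w (m (N y) x)) (N z))) + (congrArg (fun u => (N (br u (m w (N z))))) (hmc x (N y))) + (congrArg (fun u => (N (br (m (N y) x) u))) (hmc w (N z))) + (congrArg (fun u => (N (N u))) (hhm y (N x) z w)) - (congrArg (fun u => (N (N (m (N x) u)))) (hmc (br y z) w)) + (congrArg (fun u => (N (N (m z (br u w))))) (hmc y (N x))) + (congrArg (fun u => (N (N (m (br u z) w)))) (hmc y (N x))) + (congrArg (fun u => (N (N (m u w)))) (hbs (m (N x) y) z)) - (congrArg (fun u => (N (N u))) (hmc (br z (m (N x) y)) w)) - (congrArg (fun u => (N (N (br u (m z w))))) (hmc y (N x))) - (congrArg (fun u => (N u)) (hhm y (N x) z (N w))) + (congrArg (fun u => (N (m (N x) (m z u)))) (hbs y (N w))) + (congrArg (fun u => (N (m (N x) u))) (hmc (br y z) (N w))) + (congrArg (fun u => (N u)) (hN1c x w (br y z))) - (congrArg (fun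 u => (N (m (N x) (br y u)))) (hmc z (N w))) + (congrArg (fun u => (N (m y (m z u)))) (hN2 x w)) - (congrArg (fun u => (N (m y (m z (N (N u)))))) (hbs x w)) + (congrArg (fun u => (N (m y u))) (hmc z (N (N (br w x))))) + (congrArg (fun u => (N (m y u))) (hmc z (N (br (N x) w)))) + (congrArg (fun u => (N (m y (m z (N u))))) (hbs x (N w))) - (congrArg (fun u => (N (m y u))) (hmc z (N (br (N w) x)))) + (congrArg (fun u => (N (m y u))) (hmc (br (N x) z) (N w))) - (congrArg (fun u => (N (m y (br (N x) u)))) (hmc z (N w))) - (congrArg (fun u => (N (m z (br u (N w))))) (hmc y (N x))) - (congrArg (fun u => (N (m z u))) (hbs (m (N x) y) (N w))) - (congrArg (fun u => (N (m (br u z) (N w)))) (hmc y (N x))) - (congrArg (fun u => (N (m u (N w)))) (hbs (m (N x) y) z)) + (congrArg (fun u => (N u)) (hmc (br z (m (N x) y)) (N w))) + (congrArg (fun u => (N (br u (m z (N w))))) (hmc y (N x))) + (congrArg (fun u => (N (br (m (N x) y) u))) (hmc z (N w))) - (congrArg (fun u => (N u)) (hhm y (N x) w (N z))) + (congrArg (fun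 u => (N (m (N x) (m w u)))) (hbs y (N z))) + (congrArg (fun u => (N (m (N x) (m u (N z))))) (hbs y w)) - (congrArg (fun u => (N (m (N x) u))) (hmc (br w y) (N z))) - (congrArg (fun u => (N u)) (hN1c x z (br w y))) - (congrArg (fun u => (N (m (N x) (br y u)))) (hmc w (N z))) - (congrArg (fun u => (N (m (N u) (br w y)))) (hmc x (N z))) - (congrArg (fun u => (N (m w (br u (N z))))) (hmc y (N x))) - (congrArg (fun u => (N (m w u))) (hbs (m (N x) y) (N z))) + (congrArg (fun u => (N (m y (m w u)))) (hN2 x z)) - (congrArg (fun u => (N (m y u))) (hmc w (N (N (br x z))))) + (congrArg (fun u => (N (m y u))) (hmc w (N (br (N x) z)))) + (congrArg (fun u => (N (m y (m w (N u))))) (hbs x (N z))) - (congrArg (fun u => (N (m y u))) (hmc w (N (br (N z) x)))) + (congrArg (fun u => (N (m y u))) (hmc (br (N x) w) (N z))) - (congrArg (fun u => (N (m y (br (N x) u)))) (hmc w (N z))) - (congrArg (fun u => (N (m (br u w) (N z)))) (hmc y (N x))) - (congrArg (fun u => (N (m u (N z)))) (hbs (m (N x) y) w)) + (congrArg (fun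 u => (N u)) (hmc (br w (m (N x) y)) (N z))) + (congrArg (fun u => (N (br u (m w (N z))))) (hmc y (N x))) + (congrArg (fun u => (N (br (m (N x) y) u))) (hmc w (N z))) - (congrArg (fun u => (N u)) (hhm (N x) (N y) z w)) - (congrArg (fun u => (N (m z (br u w)))) (hN1 x y)) - (congrArg (fun u => (N (m z (br (N u) w)))) (hmc x (N y))) - (congrArg (fun u => (N (m (br u z) w))) (hN1 x y)) - (congrArg (fun u => (N (m (br (N u) z) w))) (hmc x (N y))) + (congrArg (fun u => (N (br u (m z w)))) (hN1 x y)) + (congrArg (fun u => (N (br (N u) (m z w)))) (hmc x (N y)))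
end

section
/- Let (A, ·, {-,-}) be an F-manifold algebra over a field of characteristic 0 and let N : A → A be a Nijenhuis operator on it. Then (A, ·_N, {-,-}_N) is also an F-manifold algebra, where x ·_N y = N(x)·y + x·N(y) − N(x·y) and {x, y}_N = {N(x), y} + {x, N(y)} − N{x,y} for x, y ∈ A. -/
variable (K : Type*) [Field K] [CharZero K]
variable {A V : Type*} [AddCommGroup A] [Module K A] [AddCommGroup V] [Module K V]

section NijenhuisAux

/-- Associativity defect with separated operation slots. -/
def nijA (e f : A →ₗ[K] A →ₗ[K] A) (x y z : A) : A :=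
  f (e x y) z - f x (e y z)

/-- Jacobi defect with separated operation slots. -/
def nijJ (e f : A →ₗ[K] A →ₗ[K] A) (x y z : A) : A :=
  f x (e y z) + f y (e z x) + f z (e x y)

/-- Hertling–Manin defect with separated operation slots. -/
def nijH (e f g : A →ₗ[K] A →ₗ[K] A) (x y z w : A) : A :=
  Pb K e f (g x y) z w - g x (Pb K e f y z w) - g y (Pb K e f x z w)

lemma nijA_split1 (e e' f : A →ₗ[K] A →ₗ[K] A) (s : K) (x y z : A) :
    nijA K (e + s • e') f x y z = nijA K e f x y z + s • nijA K e' f x y z := by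
  simp only [nijA, LinearMap.add_apply, LinearMap.smul_apply, map_add, map_smul]
  module

lemma nijA_split2 (e f f' : A →ₗ[K] A →ₗ[K] A) (s : K) (x y z : A) :
    nijA K e (f + s • f') x y z = nijA K e f x y z + s • nijA K e f' x y z := by
  simp only [nijA, LinearMap.add_apply, LinearMap.smul_apply, map_add, map_smul]
  module

lemma nijJ_split1 (e e' f : A →ₗ[K] A →ₗ[K] A) (s : K) (x y z : A) :
    nijJ K (e + s • e') f x y z = nijJ K e f x y z + s • nijJ K e' f x y z := by
  simp only [nijJ, LinearMap.add_apply, LinearMap.smul_apply, map_add, map_smul]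
  module

lemma nijJ_split2 (e f f' : A →ₗ[K] A →ₗ[K] A) (s : K) (x y z : A) :
    nijJ K e (f + s • f') x y z = nijJ K e f x y z + s • nijJ K e f' x y z := by
  simp only [nijJ, LinearMap.add_apply, LinearMap.smul_apply, map_add, map_smul]
  module

lemma Pb_split1 (e e' f : A →ₗ[K] A →ₗ[K] A) (s : K) (x y z : A) :
    Pb K (e + s • e') f x y z = Pb K e f x y z + s • Pb K e' f x y z := by
  simp only [Pb, LinearMap.add_apply, LinearMap.smul_apply, map_add, map_smul]
  module

lemma Pb_split2 (e f f' : A →ₗ[K] A →ₗ[K] A) (s : K) (x y z : A) :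
    Pb K e (f + s • f') x y z = Pb K e f x y z + s • Pb K e f' x y z := by
  simp only [Pb, LinearMap.add_apply, LinearMap.smul_apply, map_add, map_smul]
  module

lemma Pb_arg1 (e f : A →ₗ[K] A →ₗ[K] A) (s : K) (u v y z : A) :
    Pb K e f (u + s • v) y z = Pb K e f u y z + s • Pb K e f v y z := by
  simp only [Pb, LinearMap.add_apply, LinearMap.smul_apply, map_add, map_smul]
  module

lemma nijH_split1 (e e' f g : A →ₗ[K] A →ₗ[K] A) (s : K) (x y z w : A) :
    nijH K (e + s • e') f g x y z w = nijH K e f g x y z w + s • nijH K e' f g x y z w := by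
  simp only [nijH, Pb_split1, map_add, map_smul, smul_sub, smul_add]
  module

lemma nijH_split2 (e f f' g : A →ₗ[K] A →ₗ[K] A) (s : K) (x y z w : A) :
    nijH K e (f + s • f') g x y z w = nijH K e f g x y z w + s • nijH K e f' g x y z w := by
  simp only [nijH, Pb_split2, map_add, map_smul, smul_sub, smul_add]
  module

lemma nijH_split3 (e f g g' : A →ₗ[K] A →ₗ[K] A) (s : K) (x y z w : A) :
    nijH K e f (g + s • g') x y z w = nijH K e f g x y z w + s • nijH K e f g' x y z w := by
  simp only [nijH, LinearMap.add_apply, LinearMap.smul_apply, Pb_arg1]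
  module

lemma nijPoly (a b c d e : A)
    (h : ∀ t : K, a + t • b + (t*t) • c + (t*t*t) • d + (t*t*t*t) • e = 0) :
    a = 0 ∧ b = 0 ∧ c = 0 ∧ d = 0 ∧ e = 0 := by
  have h0 := h 0
  have h1 := h 1
  have h2 := h 2
  have h3 := h 3
  have h4 := h 4
  refine ⟨?_, ?_, ?_, ?_, ?_⟩
  · linear_combination (norm := module) h0
  · linear_combination (norm := module) (-25/12 : K) • h0 + (4 : K) • h1 + (-3 : K) • h2
      + (4/3 : K) • h3 + (-1/4 : K) • h4
  · linear_combination (norm := module) (35/24 : K) • h0 + (-13/3 : K) • h1 + (19/4 : K) • h2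
      + (-7/3 : K) • h3 + (11/24 : K) • h4
  · linear_combination (norm := module) (-5/12 : K) • h0 + (3/2 : K) • h1 + (-2 : K) • h2
      + (7/6 : K) • h3 + (-1/4 : K) • h4
  · linear_combination (norm := module) (1/24 : K) • h0 + (-1/6 : K) • h1 + (1/4 : K) • h2
      + (-1/6 : K) • h3 + (1/24 : K) • h4

lemma nijCascade (N : A →ₗ[K] A) (D : K → A) (a b c d : A)
    (hexp : ∀ t : K, D t = a + t • b + (t*t) • c + (t*t*t) • d)
    (hvan : ∀ t : K, D t + t • N (D t) = 0) :
    a = 0 ∧ b = 0 ∧ c = 0 ∧ d = 0 := by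
  have h5 : ∀ t : K, a + t • (b + N a) + (t*t) • (c + N b) + (t*t*t) • (d + N c)
      + (t*t*t*t) • (N d) = 0 := by
    intro t
    have h1 := hvan t
    have h2 := hexp t
    have h3 := congrArg N h2
    simp only [map_add, map_smul] at h3
    linear_combination (norm := module) h1 - h2 - t • h3
  obtain ⟨ha, hb, hc, hd, -⟩ := nijPoly K a (b + N a) (c + N b) (d + N c) (N d) h5
  have hb' : b = 0 := by rw [ha, map_zero, add_zero] at hb; exact hb
  have hc' : c = 0 := by rw [hb', map_zero, add_zero] at hc; exact hc
  have hd' : d = 0 := by rw [hc', map_zero, add_zero] at hd; exact hd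
  exact ⟨ha, hb', hc', hd'⟩

end NijenhuisAux

/-- The Nijenhuis deformation `(A, ·_N, {-,-}_N)` of an F-manifold
algebra by a Nijenhuis operator `N` is again an F-manifold algebra, where
`x ·_N y = N(x)·y + x·N(y) − N(x·y)` and `{x,y}_N = {N(x),y} + {x,N(y)} − N{x,y}`. -/
theorem FMan_nijenhuis_deformation (m br : A →ₗ[K] A →ₗ[K] A)
    (hF : IsFMan K m br) (N : A →ₗ[K] A)
    (hN1 : ∀ x y, m (N x) (N y) = N (m (N x) y + m x (N y) - N (m x y)))
    (hN2 : ∀ x y, br (N x) (N y) = N (br (N x) y + br x (N y) - N (br x y))) :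
    IsFMan K (m.comp N + m.compl₂ N - m.compr₂ N)
      (br.comp N + br.compl₂ N - br.compr₂ N) := by
  obtain ⟨hcm, has, hsk, hjc, hhm⟩ := hF
  set mN : A →ₗ[K] A →ₗ[K] A := m.comp N + m.compl₂ N - m.compr₂ N with hmN0
  set bN : A →ₗ[K] A →ₗ[K] A := br.comp N + br.compl₂ N - br.compr₂ N with hbN0
  have hmN : ∀ x y, mN x y = m (N x) y + m x (N y) - N (m x y) := by
    intro x y
    simp [hmN0, LinearMap.sub_apply, LinearMap.add_apply, LinearMap.comp_apply,
      LinearMap.compl₂_apply, LinearMap.compr₂_apply]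
  have hbN : ∀ x y, bN x y = br (N x) y + br x (N y) - N (br x y) := by
    intro x y
    simp [hbN0, LinearMap.sub_apply, LinearMap.add_apply, LinearMap.comp_apply,
      LinearMap.compl₂_apply, LinearMap.compr₂_apply]
  have hmor : ∀ (t : K) (x y : A),
      ((LinearMap.id : A →ₗ[K] A) + t • N) ((m + t • mN) x y)
        = m (((LinearMap.id : A →ₗ[K] A) + t • N) x) (((LinearMap.id : A →ₗ[K] A) + t • N) y) := by
    intro t x y
    have h := hN1 x y
    simp only [map_add, map_sub] at h
    simp only [LinearMap.add_apply, LinearMap.smul_apply, LinearMap.id_apply, hmN,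
      map_add, map_sub, map_smul]
    linear_combination (norm := module) (-(t*t)) • h
  have hbor : ∀ (t : K) (x y : A),
      ((LinearMap.id : A →ₗ[K] A) + t • N) ((br + t • bN) x y)
        = br (((LinearMap.id : A →ₗ[K] A) + t • N) x) (((LinearMap.id : A →ₗ[K] A) + t • N) y) := by
    intro t x y
    have h := hN2 x y
    simp only [map_add, map_sub] at h
    simp only [LinearMap.add_apply, LinearMap.smul_apply, LinearMap.id_apply, hbN,
      map_add, map_sub, map_smul]
    linear_combination (norm := module) (-(t*t)) • h
  have hPmor : ∀ (t : K) (u v w : A),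
      ((LinearMap.id : A →ₗ[K] A) + t • N) (Pb K (m + t • mN) (br + t • bN) u v w)
        = Pb K m br (((LinearMap.id : A →ₗ[K] A) + t • N) u) (((LinearMap.id : A →ₗ[K] A) + t • N) v)
            (((LinearMap.id : A →ₗ[K] A) + t • N) w) := by
    intro t u v w
    simp only [Pb, map_sub, hbor, hmor]
  refine ⟨?_, ?_, ?_, ?_, ?_⟩
  · intro x y
    rw [hmN x y, hmN y x, hcm (N x) y, hcm x (N y), hcm x y]
    abel
  · intro x y z
    have hvan : ∀ t : K,
        nijA K (m + t • mN) (m + t • mN) x y z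
          + t • N (nijA K (m + t • mN) (m + t • mN) x y z) = 0 := by
      intro t
      have h0 : ((LinearMap.id : A →ₗ[K] A) + t • N) (nijA K (m + t • mN) (m + t • mN) x y z) = 0 := by
        simp only [nijA, map_sub, hmor, has, sub_self]
      simpa only [LinearMap.add_apply, LinearMap.smul_apply, LinearMap.id_apply] using h0
    have hexp : ∀ t : K,
        nijA K (m + t • mN) (m + t • mN) x y z
          = nijA K m m x y z
            + t • (nijA K mN m x y z + nijA K m mN x y z)
            + (t*t) • nijA K mN mN x y z + (t*t*t) • (0 : A) := by
      intro t
      rw [nijA_split1, nijA_split2, nijA_split2]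
      module
    obtain ⟨-, -, hc, -⟩ := nijCascade K N _ _ _ _ _ hexp hvan
    simp only [nijA] at hc
    exact sub_eq_zero.mp hc
  · intro x y
    rw [hbN x y, hbN y x, hsk (N x) y, hsk x (N y), hsk x y]
    simp only [map_neg]
    abel
  · intro x y z
    have hvan : ∀ t : K,
        nijJ K (br + t • bN) (br + t • bN) x y z
          + t • N (nijJ K (br + t • bN) (br + t • bN) x y z) = 0 := by
      intro t
      have h0 : ((LinearMap.id : A →ₗ[K] A) + t • N) (nijJ K (br + t • bN) (br + t • bN) x y z) = 0 := by
        simp only [nijJ, map_add, hbor]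
        exact hjc _ _ _
      simpa only [LinearMap.add_apply, LinearMap.smul_apply, LinearMap.id_apply] using h0
    have hexp : ∀ t : K,
        nijJ K (br + t • bN) (br + t • bN) x y z
          = nijJ K br br x y z
            + t • (nijJ K bN br x y z + nijJ K br bN x y z)
            + (t*t) • nijJ K bN bN x y z + (t*t*t) • (0 : A) := by
      intro t
      rw [nijJ_split1, nijJ_split2, nijJ_split2]
      module
    obtain ⟨-, -, hc, -⟩ := nijCascade K N _ _ _ _ _ hexp hvan
    simp only [nijJ] at hc
    exact hc
  · intro x y z w
    have hvan : ∀ t : K,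
        nijH K (m + t • mN) (br + t • bN) (m + t • mN) x y z w
          + t • N (nijH K (m + t • mN) (br + t • bN) (m + t • mN) x y z w) = 0 := by
      intro t
      have h0 : ((LinearMap.id : A →ₗ[K] A) + t • N)
          (nijH K (m + t • mN) (br + t • bN) (m + t • mN) x y z w) = 0 := by
        simp only [nijH, map_sub, hmor, hPmor, hhm]
        abel
      simpa only [LinearMap.add_apply, LinearMap.smul_apply, LinearMap.id_apply] using h0
    have hexp : ∀ t : K,
        nijH K (m + t • mN) (br + t • bN) (m + t • mN) x y z w
          = nijH K m br m x y z w
            + t • (nijH K mN br m x y z w + nijH K m bN m x y z w + nijH K m br mN x y z w)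
            + (t*t) • (nijH K mN bN m x y z w + nijH K mN br mN x y z w
                + nijH K m bN mN x y z w)
            + (t*t*t) • nijH K mN bN mN x y z w := by
      intro t
      rw [nijH_split1, nijH_split2, nijH_split2, nijH_split3, nijH_split3, nijH_split3,
        nijH_split3]
      module
    obtain ⟨-, -, -, hd⟩ := nijCascade K N _ _ _ _ _ hexp hvan
    simp only [nijH] at hd
    linear_combination (norm := module) hd
end

section
/- Let (A, ·, {-,-}) be an F-manifold algebra over a field of characteristic 0 and let R : A → A be a Reynolds operator on it. Define bilinear operations x ∗ y = R(x)·y, x ⋎ y = −R(x)·R(y), x ⋄ y = {R(x), y} and x ▪ y = −{R(x), R(y)} for x, y ∈ A. Then (A, ∗, ⋎, ⋄, ▪) is an NS-F-manifold algebra. -/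
variable (K : Type*) [Field K] [CharZero K]
variable {A V : Type*} [AddCommGroup A] [Module K A] [AddCommGroup V] [Module K V]

/-- A Reynolds operator on an F-manifold algebra induces an
NS-F-manifold algebra with `x ∗ y = R(x)·y`, `x ⋎ y = −R(x)·R(y)`, `x ⋄ y = {R(x),y}`
and `x ▪ y = −{R(x),R(y)}`. -/
theorem NSFMan_of_reynolds (m br : A →ₗ[K] A →ₗ[K] A)
    (hF : IsFMan K m br) (R : A →ₗ[K] A)
    (hR1 : ∀ x y, m (R x) (R y) = R (m (R x) y + m x (R y) - m (R x) (R y)))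
    (hR2 : ∀ x y, br (R x) (R y) = R (br (R x) y + br x (R y) - br (R x) (R y))) :
    IsNSFMan K (m.comp R) (-((m.comp R).compl₂ R))
      (br.comp R) (-((br.comp R).compl₂ R)) := by
  obtain ⟨hcm, ha, hsk, hj, hm⟩ := hF
  have sA : ∀ u v : A, (m.comp R) u v = m (R u) v := fun _ _ => rfl
  have cA : ∀ u v : A, (-((m.comp R).compl₂ R)) u v = -(m (R u) (R v)) := fun _ _ => rfl
  have dA : ∀ u v : A, (br.comp R) u v = br (R u) v := fun _ _ => rfl
  have bA : ∀ u v : A, (-((br.comp R).compl₂ R)) u v = -(br (R u) (R v)) := fun _ _ => rfl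
  have hswap : ∀ u v w : A, m u (m v w) = m v (m u w) := by
    intro u v w; rw [← ha, hcm u v, ha]
  have hjac2 : ∀ u v w : A, br u (br v w) - br v (br u w) = br (br u v) w := by
    intro u v w
    have h := hj u v w
    rw [hsk w u, map_neg, hsk w (br u v)] at h
    linear_combination (norm := abel) h
  have hRodot : ∀ u v : A, R (m (R u) v + m (R v) u + -(m (R u) (R v))) = m (R u) (R v) := by
    intro u v
    rw [show m (R u) v + m (R v) u + -(m (R u) (R v))
        = m (R u) v + m u (R v) - m (R u) (R v) by rw [hcm u (R v)]; abel]
    exact (hR1 u v).symm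
  have hRlbr : ∀ u v : A, R (br (R u) v - br (R v) u + -(br (R u) (R v))) = br (R u) (R v) := by
    intro u v
    rw [show br (R u) v - br (R v) u + -(br (R u) (R v))
        = br (R u) v + br u (R v) - br (R u) (R v) by rw [hsk u (R v)]; abel]
    exact (hR2 u v).symm
  have hRodotNs : ∀ u v : A,
      R (nsOdot K (m.comp R) (-((m.comp R).compl₂ R)) u v) = m (R u) (R v) := by
    intro u v; simp only [nsOdot, sA, cA]; exact hRodot u v
  have hRlbrNs : ∀ u v : A,
      R (nsLbr K (br.comp R) (-((br.comp R).compl₂ R)) u v) = br (R u) (R v) := by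
    intro u v; simp only [nsLbr, dA, bA, sub_eq_add_neg]
    rw [show br (R u) v + -(br (R v) u) + -(br (R u) (R v))
        = br (R u) v - br (R v) u + -(br (R u) (R v)) by abel]
    exact hRlbr u v
  have F1eq : ∀ u v w : A,
      F1 K (m.comp R) (-((m.comp R).compl₂ R)) (br.comp R) (-((br.comp R).compl₂ R)) u v w
        = Pb K m br (R u) (R v) w := by
    intro u v w
    simp only [F1, sA, dA]
    rw [hRlbrNs u v]
    simp only [Pb]
    abel
  have F2eq : ∀ u v w : A,
      F2 K (m.comp R) (-((m.comp R).compl₂ R)) (br.comp R) (-((br.comp R).compl₂ R)) u v w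
        = Pb K m br w (R u) (R v) := by
    intro u v w
    simp only [F2, sA, dA, Pb]
    rw [hRodotNs u v, hsk w (m (R u) (R v)), hsk w (R u), hsk w (R v)]
    simp only [map_neg, LinearMap.neg_apply]
    rw [hcm (br (R u) w) (R v)]
    abel
  have F3eq : ∀ u v w : A,
      F3 K (m.comp R) (-((m.comp R).compl₂ R)) (br.comp R) (-((br.comp R).compl₂ R)) u v w
        = -(Pb K m br (R u) (R v) (R w)) - Pb K m br (R u) (R v) (R w) := by
    intro u v w
    simp only [F3, sA, cA, dA, bA]
    rw [hRodotNs v w, hRlbrNs u w, hRlbrNs u v]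
    simp only [map_neg, Pb]
    rw [hcm (R w) (br (R u) (R v))]
    abel
  have Pbneg : ∀ u v w : A, Pb K m br (-u) v w = -(Pb K m br u v w) := by
    intro u v w
    simp only [Pb, map_neg, LinearMap.neg_apply]
    abel
  have hRG : ∀ x y z : A,
      R (F1 K (m.comp R) (-((m.comp R).compl₂ R)) (br.comp R) (-((br.comp R).compl₂ R)) x y z
        + F1 K (m.comp R) (-((m.comp R).compl₂ R)) (br.comp R) (-((br.comp R).compl₂ R)) x z y
        + F2 K (m.comp R) (-((m.comp R).compl₂ R)) (br.comp R) (-((br.comp R).compl₂ R)) y z x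
        + F3 K (m.comp R) (-((m.comp R).compl₂ R)) (br.comp R) (-((br.comp R).compl₂ R)) x y z)
      = Pb K m br (R x) (R y) (R z) := by
    intro x y z
    have hθ : R (m (R y) z + m y (R z) - m (R y) (R z)) = m (R y) (R z) := (hR1 y z).symm
    have hA := hR2 x (m (R y) z + m y (R z) - m (R y) (R z))
    rw [hθ] at hA
    have hφ : R (br (R x) y + br x (R y) - br (R x) (R y)) = br (R x) (R y) := (hR2 x y).symm
    have hB := hR1 (br (R x) y + br x (R y) - br (R x) (R y)) z
    rw [hφ] at hB
    have hψ : R (br (R x) z + br x (R z) - br (R x) (R z)) = br (R x) (R z) := (hR2 x z).symm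
    have hC := hR1 (br (R x) z + br x (R z) - br (R x) (R z)) y
    rw [hψ] at hC
    rw [F1eq x y z, F1eq x z y, F2eq y z x, F3eq x y z]
    have h0 : Pb K m br (R x) (R y) (R z)
        = br (R x) (m (R y) (R z)) - m (br (R x) (R y)) (R z) - m (br (R x) (R z)) (R y) := by
      simp only [Pb]
      rw [hcm (R y) (br (R x) (R z))]
    have target : Pb K m br (R x) (R y) (R z)
        = R ((br (R x) (m (R y) z + m y (R z) - m (R y) (R z)) + br x (m (R y) (R z))
              - br (R x) (m (R y) (R z)))
          - (m (br (R x) (R y)) z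
              + m (br (R x) y + br x (R y) - br (R x) (R y)) (R z)
              - m (br (R x) (R y)) (R z))
          - (m (br (R x) (R z)) y
              + m (br (R x) z + br x (R z) - br (R x) (R z)) (R y)
              - m (br (R x) (R z)) (R y))) := by
      conv_lhs => rw [h0, hA, hB, hC, ← map_sub, ← map_sub]
    refine Eq.trans ?_ target.symm
    congr 1
    simp only [Pb, map_add, map_sub, map_neg, LinearMap.add_apply, LinearMap.sub_apply,
      LinearMap.neg_apply]
    rw [hcm y (R z), hcm (br (R x) y) (R z), hcm (br (R x) z) (R y),
      hcm (br x (R z)) (R y), hcm (br (R x) (R z)) (R y)]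
    abel
  refine ⟨⟨?_, ?_, ?_⟩, ⟨?_, ?_, ?_⟩, ?_, ?_, ?_⟩
  · intro x y
    simp only [cA]
    rw [hcm (R x) (R y)]
  · intro x y z
    simp only [sA, cA]
    rw [hRodot x y]
    exact (ha (R x) (R y) z).symm
  · intro x y z
    simp only [sA, cA]
    rw [hRodot y z, hRodot x z]
    simp only [map_neg]
    rw [hswap (R x) (R y) (R z)]
  · intro x y
    simp only [bA]
    rw [hsk (R x) (R y)]
  · intro x y z
    simp only [dA, bA]
    simp only [map_neg, LinearMap.neg_apply]
    have h1 := hjac2 (R x) (R y) z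
    have h2 : R (br (R x) y) - R (br (R y) x) - R (br (R x) (R y)) = br (R x) (R y) := by
      have h := (hR2 x y).symm
      rw [hsk x (R y)] at h
      simp only [map_add, map_sub, map_neg] at h
      linear_combination (norm := abel) h
    have h3 : br (R (br (R x) y)) z - br (R (br (R y) x)) z - br (R (br (R x) (R y))) z
        = br (br (R x) (R y)) z := by
      conv_rhs => rw [← h2]
      simp only [map_sub, LinearMap.sub_apply]
    linear_combination (norm := abel) h1 - h3
  · intro x y z
    simp only [dA, bA, sub_eq_add_neg]
    rw [show br (R y) z + -(br (R z) y) + -(br (R y) (R z))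
        = br (R y) z - br (R z) y + -(br (R y) (R z)) by abel]
    rw [show br (R z) x + -(br (R x) z) + -(br (R z) (R x))
        = br (R z) x - br (R x) z + -(br (R z) (R x)) by abel]
    rw [show br (R x) y + -(br (R y) x) + -(br (R x) (R y))
        = br (R x) y - br (R y) x + -(br (R x) (R y)) by abel]
    rw [hRlbr y z, hRlbr z x, hRlbr x y]
    simp only [map_neg]
    linear_combination (norm := abel) (-2 : ℤ) • hj (R x) (R y) (R z)
  · intro x y z w
    rw [F1eq (nsOdot K (m.comp R) (-((m.comp R).compl₂ R)) x y) z w, F1eq y z w, F1eq x z w]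
    simp only [sA]
    rw [hRodotNs x y]
    exact hm (R x) (R y) (R z) w
  · intro x y z w
    simp only [sA]
    rw [hRG x y z, F2eq y z (m (R x) w), F2eq y z w, hm (R x) w (R y) (R z)]
    rw [hcm (Pb K m br (R x) (R y) (R z)) w]
    abel
  · intro x y z w
    simp only [sA, cA]
    rw [hRG y z w, hRG x z w]
    rw [F3eq (nsOdot K (m.comp R) (-((m.comp R).compl₂ R)) x y) z w, F3eq y z w, F3eq x z w,
      F2eq z w (-(m (R y) (R x)))]
    rw [hRodotNs x y, Pbneg]
    rw [hm (R x) (R y) (R z) (R w), hm (R y) (R x) (R z) (R w)]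
    simp only [map_sub, map_neg]
    abel
end

section
/- Let (A, ▷, ◁, ∘) be an NS-pre-Lie algebra over a field of characteristic 0. Define bilinear operations x ⋄ y = x ▷ y − y ◁ x and x ▪ y = x ∘ y − y ∘ x. Then (A, ⋄, ▪) is an NS-Lie algebra. -/
variable (K : Type*) [Field K] [CharZero K]
variable {A V : Type*} [AddCommGroup A] [Module K A] [AddCommGroup V] [Module K V]

/-- An NS-pre-Lie algebra structure on `A`. -/
def IsNSPreLie (rt lt ci : A →ₗ[K] A →ₗ[K] A) : Prop :=
  (∀ x y z, rt (rt x y + lt x y + ci x y) z - rt x (rt y z)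
      = rt (rt y x + lt y x + ci y x) z - rt y (rt x z)) ∧
  (∀ x y z, rt x (lt y z) - lt (rt x y) z
      = lt y (rt x z + lt x z + ci x z) - lt (lt y x) z) ∧
  (∀ x y z, ci (rt x y + lt x y + ci x y) z - ci x (rt y z + lt y z + ci y z)
        + lt (ci x y) z - rt x (ci y z)
      = ci (rt y x + lt y x + ci y x) z - ci y (rt x z + lt x z + ci x z)
        + lt (ci y x) z - rt y (ci x z))

/-- An NS-pre-Lie algebra `(A, ▷, ◁, ∘)` gives an NS-Lie algebra with
`x ⋄ y = x ▷ y − y ◁ x` and `x ▪ y = x ∘ y − y ∘ x`. -/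
theorem NSLie_of_NSPreLie (rt lt ci : A →ₗ[K] A →ₗ[K] A)
    (h : IsNSPreLie K rt lt ci) :
    IsNSLie K (rt - lt.flip) (ci - ci.flip) := by
  obtain ⟨h1, h2, h3⟩ := h
  refine ⟨fun x y => ?_, fun x y z => ?_, fun x y z => ?_⟩
  · simp only [LinearMap.sub_apply, LinearMap.flip_apply]
    abel
  · have e1 := h1 x y z
    have e2 := h2 x z y
    have e3 := h2 y z x
    simp only [LinearMap.sub_apply, LinearMap.flip_apply, map_add, map_sub,
      LinearMap.add_apply] at e1 e2 e3 ⊢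
    linear_combination (norm := abel) - e1 - e2 + e3
  · have e1 := h3 x y z
    have e2 := h3 x z y
    have e3 := h3 y z x
    simp only [LinearMap.sub_apply, LinearMap.flip_apply, map_add, map_sub,
      LinearMap.add_apply] at e1 e2 e3 ⊢
    linear_combination (norm := abel) - e1 + e2 - e3
end
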